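/- arXiv:2308.12653 — 3 statements merged into one kernel-verified Lean document; each statement's English description precedes it below -/
import Mathlib

section
/- Let T be a tree in a graph G with conservative weights containing all negative-weight edges of G, and let x, y, x', y' be four distinct vertices of T. If Q is a path from x to y, Q' is a path from x' to y', and Q and Q' are vertex-disjoint, then w(Q) + w(Q') ≥ w(T[x,y] △ T[x',y']), the weight of the symmetric difference of the two tree paths. -/
open SimpleGraph

/-- The total weight of a walk, counting edges with multiplicity. -/
def walkWeight {V : Type*} (G : SimpleGraph V) (w : Sym2 V → ℝ) {u v : V}
    (p : G.Walk u v) : ℝ :=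
  (p.edges.map w).sum

/-- A weight function is conservative if every cycle has non-negative total weight. -/
def Conservative {V : Type*} (G : SimpleGraph V) (w : Sym2 V → ℝ) : Prop :=
  ∀ (v : V) (c : G.Walk v v), c.IsCycle → 0 ≤ walkWeight G w c

/-- The subgraph of `G` spanned by the negative-weight edges. -/
def negSub {V : Type*} (G : SimpleGraph V) (w : Sym2 V → ℝ) : SimpleGraph V where
  Adj u v := G.Adj u v ∧ w s(u, v) < 0
  symm := ⟨fun u v ⟨h, hwuv⟩ => ⟨h.symm, by rwa [Sym2.eq_swap]⟩⟩
  loopless := ⟨fun u ⟨h, _⟩ => G.irrefl h⟩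

section Aux

variable {V : Type*} [DecidableEq V]

/-- Degree of a vertex in a finite edge set. -/
private def edeg (S : Finset (Sym2 V)) (v : V) : ℕ := (S.filter (fun e => v ∈ e)).card

private lemma walk_countP_parity {G : SimpleGraph V} {a b : V} (P : G.Walk a b) (t : V) :
    Even (P.edges.countP (fun e => t ∈ e)) ↔ (t = a ↔ t = b) := by
  induction P with
  | nil => simp
  | @cons a c b h P ih =>
    rw [Walk.edges_cons, List.countP_cons]
    have hac : a ≠ c := h.ne
    by_cases hta : t = a <;> by_cases htc : t = c <;>
      simp_all [Sym2.mem_iff, Nat.even_add_one, eq_comm]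

private lemma edeg_toFinset {l : List (Sym2 V)} (h : l.Nodup) (t : V) :
    edeg l.toFinset t = l.countP (fun e => t ∈ e) := by
  unfold edeg
  rw [List.countP_eq_length_filter, ← List.toFinset_card_of_nodup (h.filter _),
    List.toFinset_filter]
  simp

private lemma card_add_card (u w : Finset (Sym2 V)) :
    u.card + w.card = (symmDiff u w).card + 2 * (u ∩ w).card := by
  have h1 : symmDiff u w = (u ∪ w) \ (u ∩ w) := by
    ext e; simp [Finset.mem_symmDiff]; tauto
  have h2 := Finset.card_union_add_card_inter u w
  have h3 : (u ∩ w) ⊆ (u ∪ w) := (Finset.inter_subset_left).trans Finset.subset_union_left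
  rw [h1, Finset.card_sdiff_of_subset h3]
  have := Finset.card_le_card h3
  omega

private lemma filter_symmDiff' (s t : Finset (Sym2 V)) (p : Sym2 V → Prop) [DecidablePred p] :
    (symmDiff s t).filter p = symmDiff (s.filter p) (t.filter p) := by
  ext e; simp [Finset.mem_symmDiff]; tauto

private lemma edeg_symmDiff (s t : Finset (Sym2 V)) (v : V) :
    edeg s v + edeg t v = edeg (symmDiff s t) v + 2 * edeg (s ∩ t) v := by
  unfold edeg
  rw [filter_symmDiff', Finset.filter_inter_distrib]
  exact card_add_card _ _

private lemma edeg_union_of_disjoint {s t : Finset (Sym2 V)} (h : Disjoint s t) (v : V) :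
    edeg (s ∪ t) v = edeg s v + edeg t v := by
  unfold edeg
  rw [Finset.filter_union,
    Finset.card_union_of_disjoint (h.mono (Finset.filter_subset _ _) (Finset.filter_subset _ _))]

private lemma edeg_sdiff {s t : Finset (Sym2 V)} (h : t ⊆ s) (v : V) :
    edeg (s \ t) v = edeg s v - edeg t v := by
  unfold edeg
  have : (s \ t).filter (fun e => v ∈ e)
      = s.filter (fun e => v ∈ e) \ t.filter (fun e => v ∈ e) := by
    ext e; simp; tauto
  rw [this, Finset.card_sdiff_of_subset (Finset.filter_subset_filter _ h)]

private lemma edeg_le_of_subset {s t : Finset (Sym2 V)} (h : t ⊆ s) (v : V) :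
    edeg t v ≤ edeg s v :=
  Finset.card_le_card (Finset.filter_subset_filter _ h)

private lemma exists_cycle_of_even [Fintype V] (G : SimpleGraph V)
    (S : Finset (Sym2 V)) (hS : ∀ e ∈ S, e ∈ G.edgeSet) (hne : S.Nonempty)
    (heven : ∀ v, Even (edeg S v)) :
    ∃ (u : V) (c : G.Walk u u), c.IsCycle ∧ ∀ e ∈ c.edges, e ∈ S := by
  classical
  -- the graph spanned by S
  set H : SimpleGraph V := {
    Adj := fun u v => s(u, v) ∈ S ∧ u ≠ v
    symm := ⟨fun u v ⟨h1, h2⟩ => ⟨by rwa [Sym2.eq_swap], h2.symm⟩⟩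
    loopless := ⟨fun u ⟨_, h2⟩ => h2 rfl⟩ } with hH
  have hHS : ∀ {u v : V}, H.Adj u v → s(u, v) ∈ S := fun h => h.1
  have hHG : ∀ e ∈ H.edgeSet, e ∈ G.edgeSet := by
    intro e he
    induction e with
    | _ u v => exact hS _ (hHS he)
  -- a path of length 1 exists
  obtain ⟨e, heS⟩ := hne
  obtain ⟨b0, he0⟩ := Sym2.mem_iff_exists.mp e.out_fst_mem
  set a0 := e.out.1 with ha0
  rw [he0] at heS
  clear he0
  have hab : a0 ≠ b0 := by
    intro hcon; exact G.not_isDiag_of_mem_edgeSet (hS _ heS) (by simp [hcon])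
  have hP1 : ∃ (u v : V) (q : H.Walk u v), q.IsPath ∧ q.length = 1 := by
    refine ⟨a0, b0, Walk.cons ⟨heS, hab⟩ Walk.nil, ?_, rfl⟩
    simp [Walk.cons_isPath_iff, hab]
  -- choose a path of maximal length
  set Pr : ℕ → Prop := fun n => ∃ (u v : V) (q : H.Walk u v), q.IsPath ∧ q.length = n with hPr
  have hbound : ∀ k, Pr k → k ≤ Fintype.card V := by
    rintro k ⟨u, v, q, hq, rfl⟩; exact hq.length_lt.le
  set n := Nat.findGreatest Pr (Fintype.card V) with hn
  have hPn : Pr n := Nat.findGreatest_spec (hbound 1 hP1) hP1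
  have hone : 1 ≤ n := Nat.le_findGreatest (hbound 1 hP1) hP1
  have hmax : ∀ k, Pr k → k ≤ n := by
    intro k hk
    by_contra hlt
    exact Nat.findGreatest_is_greatest (lt_of_not_ge hlt) (hbound k hk) hk
  obtain ⟨u, v, q, hq, hlen⟩ := hPn
  -- reverse the path so that it starts at `v`
  set R := q.reverse with hR
  have hRpath : R.IsPath := hq.reverse
  have hRlen : R.length = n := by rw [hR, Walk.length_reverse, hlen]
  cases hRnil : R with
  | nil => rw [hRnil] at hRlen; simp at hRlen; omega
  | @cons _ c _ h R' =>
    rw [hRnil] at hRpath hRlen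
    have hR'path : R'.IsPath := hRpath.of_cons
    have hvR' : v ∉ R'.support := (Walk.cons_isPath_iff _ _ |>.mp hRpath).2
    -- v has degree ≥ 2 in S
    have hvc : s(v, c) ∈ S := hHS h
    have hdeg1 : s(v, c) ∈ S.filter (fun e => v ∈ e) := by
      simp [Finset.mem_filter, hvc]
    have hdeg2 : 1 < (S.filter (fun e => v ∈ e)).card := by
      have h1 : 1 ≤ (S.filter (fun e => v ∈ e)).card := Finset.card_pos.mpr ⟨_, hdeg1⟩
      have h2 := heven v
      unfold edeg at h2
      rcases h2 with ⟨m, hm⟩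
      omega
    obtain ⟨e', he'mem, he'ne⟩ := Finset.exists_mem_ne hdeg2 s(v, c)
    rw [Finset.mem_filter] at he'mem
    obtain ⟨he'S, hve'⟩ := he'mem
    obtain ⟨z, rfl⟩ := Sym2.mem_iff_exists.mp hve'
    have hzv : z ≠ v := by
      intro hcon
      exact G.not_isDiag_of_mem_edgeSet (hS _ he'S) (by simp [hcon])
    have hzc : z ≠ c := by
      intro hcon; exact he'ne (by rw [hcon])
    have hAdjvz : H.Adj v z := ⟨he'S, fun hcon => hzv hcon.symm⟩
    by_cases hzsup : z ∈ (Walk.cons h R').support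
    · -- found a cycle through z
      set W := (Walk.cons h R').takeUntil z hzsup with hW
      have hWpath : W.IsPath := hRpath.takeUntil hzsup
      have hedge : s(v, z) ∉ W.edges := by
        intro hmem
        have := Walk.edges_takeUntil_subset (Walk.cons h R') hzsup hmem
        rw [Walk.edges_cons] at this
        rcases List.mem_cons.mp this with h1 | h2
        · rw [Sym2.congr_right] at h1; exact hzc h1
        · exact hvR' (Walk.fst_mem_support_of_mem_edges R' h2)
      set c0 : H.Walk v v := Walk.cons hAdjvz W.reverse with hc0
      have hc0cyc : c0.IsCycle := by
        rw [hc0, Walk.cons_isCycle_iff]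
        refine ⟨hWpath.reverse, ?_⟩
        rw [Walk.edges_reverse, List.mem_reverse]
        exact hedge
      have hc0S : ∀ e ∈ c0.edges, e ∈ S := by
        intro e he
        have : e ∈ H.edgeSet := Walk.edges_subset_edgeSet c0 he
        induction e with
        | _ a b => exact hHS this
      exact ⟨v, c0.transfer G (fun e he => hHG e (Walk.edges_subset_edgeSet c0 he)),
        hc0cyc.transfer _, by rw [Walk.edges_transfer]; exact hc0S⟩
    · -- the path can be extended, contradicting maximality
      exfalso
      have hnew : (Walk.cons hAdjvz.symm (Walk.cons h R')).IsPath := by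
        rw [Walk.cons_isPath_iff]
        exact ⟨hRpath, hzsup⟩
      have : Pr (n + 1) := ⟨z, _, _, hnew, by simp [hRlen]⟩
      have := hmax _ this
      omega

private lemma even_set_sum_nonneg [Fintype V] (G : SimpleGraph V) (w : Sym2 V → ℝ)
    (hw : Conservative G w) :
    ∀ (S : Finset (Sym2 V)), (∀ e ∈ S, e ∈ G.edgeSet) → (∀ v, Even (edeg S v)) →
      0 ≤ ∑ e ∈ S, w e := by
  intro S
  induction S using Finset.strongInduction with
  | _ S ih =>
    intro hSG heven
    rcases S.eq_empty_or_nonempty with rfl | hne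
    · simp
    · obtain ⟨u, c, hcyc, hcS⟩ := exists_cycle_of_even G S hSG hne heven
      have hnodup : c.edges.Nodup := hcyc.edges_nodup
      set C := c.edges.toFinset with hC
      have hCS : C ⊆ S := by
        intro e he; exact hcS e (List.mem_toFinset.mp he)
      have hCne : C.Nonempty := by
        have : c.edges ≠ [] := by
          have h3 := hcyc.three_le_length
          intro hnil
          rw [← Walk.length_edges, hnil] at h3
          simp at h3
        obtain ⟨e, he⟩ := List.exists_mem_of_ne_nil _ this
        exact ⟨e, List.mem_toFinset.mpr he⟩
      have hssub : S \ C ⊂ S := by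
        obtain ⟨e, he⟩ := hCne
        refine Finset.sdiff_ssubset ?_ ?_ <;> first | exact hCS | exact ⟨e, he⟩
      have hevenC : ∀ v, Even (edeg C v) := by
        intro v
        rw [hC, edeg_toFinset hnodup]
        rw [walk_countP_parity c v]
      have heven' : ∀ v, Even (edeg (S \ C) v) := by
        intro v
        rw [edeg_sdiff hCS]
        have h1 := heven v
        have h2 := hevenC v
        have h3 := edeg_le_of_subset hCS v
        rcases h1 with ⟨m, hm⟩; rcases h2 with ⟨k, hk⟩
        exact ⟨m - k, by omega⟩
      have hrec := ih _ hssub (fun e he => hSG e (Finset.mem_sdiff.mp he).1) heven'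
      have hcyc0 : 0 ≤ walkWeight G w c := hw u c hcyc
      have hcsum : walkWeight G w c = ∑ e ∈ C, w e := by
        rw [hC, List.sum_toFinset _ hnodup]
        rfl
      have hsplit : ∑ e ∈ S \ C, w e + ∑ e ∈ C, w e = ∑ e ∈ S, w e :=
        Finset.sum_sdiff hCS
      linarith [hcsum ▸ hcyc0]

end Aux

/-- Let `T` be the tree of negative edges of `G` (`w` conservative), and let
`x, y, x', y'` be four distinct vertices of `T`.  If `Q` is an `(x,y)`-path and `Q'` an
`(x',y')`-path which are vertex-disjoint, then
`w(Q) + w(Q') ≥ w(T[x,y] △ T[x',y'])`. -/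
theorem disjoint_paths_weight_ge_symmDiff {V : Type*} [Fintype V] [DecidableEq V]
    (G : SimpleGraph V) (w : Sym2 V → ℝ) (hw : Conservative G w)
    (htree : ∀ a b : V, (∃ z, (negSub G w).Adj a z) → (∃ z, (negSub G w).Adj b z) →
      (negSub G w).Reachable a b)
    {x y x' y' : V}
    (hdistinct : x ≠ y ∧ x ≠ x' ∧ x ≠ y' ∧ y ≠ x' ∧ y ≠ y' ∧ x' ≠ y')
    (hx : ∃ a, (negSub G w).Adj x a) (hy : ∃ a, (negSub G w).Adj y a)
    (hx' : ∃ a, (negSub G w).Adj x' a) (hy' : ∃ a, (negSub G w).Adj y' a)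
    (Q : G.Walk x y) (hQ : Q.IsPath) (Q' : G.Walk x' y') (hQ' : Q'.IsPath)
    (hdisj : ∀ v ∈ Q.support, v ∉ Q'.support)
    (p : (negSub G w).Walk x y) (hp : p.IsPath)
    (p' : (negSub G w).Walk x' y') (hp' : p'.IsPath) :
    ∑ e ∈ (symmDiff p.edges.toFinset p'.edges.toFinset), w e ≤
      walkWeight G w Q + walkWeight G w Q' := by
  classical
  set A1 := Q.edges.toFinset with hA1
  set A2 := Q'.edges.toFinset with hA2
  set B1 := p.edges.toFinset with hB1
  set B2 := p'.edges.toFinset with hB2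
  set A := A1 ∪ A2 with hA
  set B := symmDiff B1 B2 with hB
  -- edges of negSub walks have negative weight
  have hnegB : ∀ e ∈ B, w e < 0 := by
    intro e he
    have hmem : e ∈ p.edges ∨ e ∈ p'.edges := by
      rcases Finset.mem_symmDiff.mp he with ⟨h1, _⟩ | ⟨h1, _⟩
      · exact Or.inl (List.mem_toFinset.mp h1)
      · exact Or.inr (List.mem_toFinset.mp h1)
    have hEdge : e ∈ (negSub G w).edgeSet := by
      rcases hmem with h1 | h1
      · exact Walk.edges_subset_edgeSet _ h1
      · exact Walk.edges_subset_edgeSet _ h1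
    induction e with
    | _ a b => exact (show G.Adj a b ∧ w s(a, b) < 0 from hEdge).2
  have hBG : ∀ e ∈ B, e ∈ G.edgeSet := by
    intro e he
    have hmem : e ∈ p.edges ∨ e ∈ p'.edges := by
      rcases Finset.mem_symmDiff.mp he with ⟨h1, _⟩ | ⟨h1, _⟩
      · exact Or.inl (List.mem_toFinset.mp h1)
      · exact Or.inr (List.mem_toFinset.mp h1)
    have hEdge : e ∈ (negSub G w).edgeSet := by
      rcases hmem with h1 | h1
      · exact Walk.edges_subset_edgeSet _ h1
      · exact Walk.edges_subset_edgeSet _ h1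
    induction e with
    | _ a b => exact (show G.Adj a b ∧ w s(a, b) < 0 from hEdge).1
  have hAG : ∀ e ∈ A, e ∈ G.edgeSet := by
    intro e he
    rcases Finset.mem_union.mp he with h1 | h1
    · exact Walk.edges_subset_edgeSet _ (List.mem_toFinset.mp h1)
    · exact Walk.edges_subset_edgeSet _ (List.mem_toFinset.mp h1)
  -- Q and Q' are edge-disjoint
  have hA12 : Disjoint A1 A2 := by
    rw [Finset.disjoint_left]
    intro e he1 he2
    rw [hA1, List.mem_toFinset] at he1
    rw [hA2, List.mem_toFinset] at he2
    induction e with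
    | _ a b =>
      exact hdisj a (Walk.fst_mem_support_of_mem_edges Q he1)
        (Walk.fst_mem_support_of_mem_edges Q' he2)
  -- nodup edge lists
  have hndQ : Q.edges.Nodup := hQ.isTrail.edges_nodup
  have hndQ' : Q'.edges.Nodup := hQ'.isTrail.edges_nodup
  have hndp : p.edges.Nodup := hp.isTrail.edges_nodup
  have hndp' : p'.edges.Nodup := hp'.isTrail.edges_nodup
  -- all degrees of A △ B are even
  have heven : ∀ v, Even (edeg (symmDiff A B) v) := by
    intro v
    have e1 := edeg_symmDiff A B v
    have e2 := edeg_union_of_disjoint hA12 v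
    have e3 := edeg_symmDiff B1 B2 v
    have p1 : Even (edeg A1 v + edeg B1 v) := by
      rw [Nat.even_add, hA1, hB1, edeg_toFinset hndQ, edeg_toFinset hndp,
        walk_countP_parity, walk_countP_parity]
    have p2 : Even (edeg A2 v + edeg B2 v) := by
      rw [Nat.even_add, hA2, hB2, edeg_toFinset hndQ', edeg_toFinset hndp',
        walk_countP_parity, walk_countP_parity]
    rcases p1 with ⟨m1, hm1⟩
    rcases p2 with ⟨m2, hm2⟩
    rw [← hA, ← hB] at *
    refine Nat.even_iff.mpr ?_
    omega
  have hSG : ∀ e ∈ symmDiff A B, e ∈ G.edgeSet := by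
    intro e he
    rcases Finset.mem_symmDiff.mp he with ⟨h1, _⟩ | ⟨h1, _⟩
    · exact hAG e h1
    · exact hBG e h1
  have hmain : 0 ≤ ∑ e ∈ symmDiff A B, w e :=
    even_set_sum_nonneg G w hw _ hSG heven
  -- sum decompositions
  have hsum1 : ∑ e ∈ symmDiff A B, w e = ∑ e ∈ A \ B, w e + ∑ e ∈ B \ A, w e := by
    rw [show symmDiff A B = (A \ B) ∪ (B \ A) from symmDiff_def A B,
      Finset.sum_union disjoint_sdiff_sdiff]
  have hsum2 : ∑ e ∈ A \ B, w e + ∑ e ∈ A ∩ B, w e = ∑ e ∈ A, w e := by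
    have := Finset.sum_sdiff (f := w) (Finset.inter_subset_left (s₁ := A) (s₂ := B))
    rwa [Finset.sdiff_inter_self_left] at this
  have hsum3 : ∑ e ∈ B \ A, w e + ∑ e ∈ A ∩ B, w e = ∑ e ∈ B, w e := by
    have := Finset.sum_sdiff (f := w) (Finset.inter_subset_right (s₁ := A) (s₂ := B))
    rwa [Finset.sdiff_inter_self_right] at this
  have hBA : ∑ e ∈ B \ A, w e ≤ 0 :=
    Finset.sum_nonpos fun e he => (hnegB e (Finset.mem_sdiff.mp he).1).le
  have hsumA : ∑ e ∈ A, w e = walkWeight G w Q + walkWeight G w Q' := by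
    rw [hA, Finset.sum_union hA12, hA1, hA2, List.sum_toFinset _ hndQ,
      List.sum_toFinset _ hndQ']
    rfl
  linarith
end

section
/- Let G be a graph with conservative weight function w and let P be a minimum-weight path from s to t. If T is a connected component of the subgraph of negative-weight edges (hence a tree), then for any two vertices u, v lying both on P and on T, the subpath of P between u and v coincides with the unique path in T between u and v. -/
open SimpleGraph

set_option linter.unusedSectionVars false
set_option maxHeartbeats 1000000

namespace NegTreeAux

open SimpleGraph.Walk

variable {V : Type*} [DecidableEq V] {G : SimpleGraph V}

lemma negSub_le {w : Sym2 V → ℝ} : negSub G w ≤ G := fun _ _ h => And.left h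

/-! ### take/drop toolkit -/

@[simp] lemma takeUntil_start {v w : V} (p : G.Walk v w) (h : v ∈ p.support) :
    p.takeUntil v h = Walk.nil := by
  cases p <;> simp [Walk.takeUntil]

@[simp] lemma dropUntil_start {v w : V} (p : G.Walk v w) (h : v ∈ p.support) :
    p.dropUntil v h = p := by
  cases p <;> simp [Walk.dropUntil]

lemma mem_support_cons_of_ne {u v x w : V} {p : G.Walk x w} {r : G.Adj v x}
    (h : u ∈ (Walk.cons r p).support) (hne : v ≠ u) : u ∈ p.support := by
  rcases List.mem_cons.mp (Walk.support_cons r p ▸ h : u ∈ v :: p.support) with h1 | h2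
  · exact absurd h1.symm hne
  · exact h2

lemma takeUntil_cons {u v x w : V} {p : G.Walk x w} {r : G.Adj v x}
    (h : u ∈ (Walk.cons r p).support) (hne : v ≠ u) :
    (Walk.cons r p).takeUntil u h = Walk.cons r (p.takeUntil u (mem_support_cons_of_ne h hne)) := by
  simp [Walk.takeUntil, hne]

lemma dropUntil_cons {u v x w : V} {p : G.Walk x w} {r : G.Adj v x}
    (h : u ∈ (Walk.cons r p).support) (hne : v ≠ u) :
    (Walk.cons r p).dropUntil u h = p.dropUntil u (mem_support_cons_of_ne h hne) := by
  simp [Walk.dropUntil, hne]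

lemma takeUntil_congr {u a c : V} {p q : G.Walk a c} (hpq : p = q) (h : u ∈ p.support) :
    p.takeUntil u h = q.takeUntil u (hpq ▸ h) := by subst hpq; rfl

lemma dropUntil_congr {u a c : V} {p q : G.Walk a c} (hpq : p = q) (h : u ∈ p.support) :
    p.dropUntil u h = q.dropUntil u (hpq ▸ h) := by subst hpq; rfl

lemma takeUntil_append_left {u a b c : V} {A : G.Walk a b} {B : G.Walk b c}
    (h : u ∈ (A.append B).support) (hA : u ∈ A.support) :
    (A.append B).takeUntil u h = A.takeUntil u hA := by
  induction A with
  | nil =>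
      rw [mem_support_nil_iff] at hA; subst hA
      simp
  | @cons a a' b r p ih =>
      rcases eq_or_ne a u with rfl | hne
      · simp
      · have h' : u ∈ p.support := mem_support_cons_of_ne hA hne
        simp only [Walk.cons_append] at h ⊢
        rw [takeUntil_cons h hne, takeUntil_cons hA hne]
        congr 1
        exact ih _ _

lemma dropUntil_append_left {u a b c : V} {A : G.Walk a b} {B : G.Walk b c}
    (h : u ∈ (A.append B).support) (hA : u ∈ A.support) :
    (A.append B).dropUntil u h = (A.dropUntil u hA).append B := by
  induction A with
  | nil =>
      rw [mem_support_nil_iff] at hA; subst hA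
      simp
  | @cons a a' b r p ih =>
      rcases eq_or_ne a u with rfl | hne
      · simp
      · have h' : u ∈ p.support := mem_support_cons_of_ne hA hne
        simp only [Walk.cons_append] at h ⊢
        rw [dropUntil_cons h hne, dropUntil_cons hA hne]
        exact ih _ _

lemma takeUntil_append_right {u a b c : V} {A : G.Walk a b} {B : G.Walk b c}
    (h : u ∈ (A.append B).support) (hA : u ∉ A.support) (hB : u ∈ B.support) :
    (A.append B).takeUntil u h = A.append (B.takeUntil u hB) := by
  induction A with
  | nil => simp
  | @cons a a' b r p ih =>
      have hne : a ≠ u := fun hh => hA (hh ▸ Walk.start_mem_support _)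
      have hp : u ∉ p.support := fun hh => hA (by simp [hh])
      simp only [Walk.cons_append] at h ⊢
      rw [takeUntil_cons h hne, ih (mem_support_cons_of_ne h hne) hp]

lemma dropUntil_append_right {u a b c : V} {A : G.Walk a b} {B : G.Walk b c}
    (h : u ∈ (A.append B).support) (hA : u ∉ A.support) (hB : u ∈ B.support) :
    (A.append B).dropUntil u h = B.dropUntil u hB := by
  induction A with
  | nil => simp
  | @cons a a' b r p ih =>
      have hne : a ≠ u := fun hh => hA (hh ▸ Walk.start_mem_support _)
      have hp : u ∉ p.support := fun hh => hA (by simp [hh])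
      simp only [Walk.cons_append] at h ⊢
      rw [dropUntil_cons h hne, ih (mem_support_cons_of_ne h hne) hp]

lemma takeUntil_takeUntil {c d s t : V} {p : G.Walk s t} (hd : d ∈ p.support)
    (hc : c ∈ (p.takeUntil d hd).support) (hc' : c ∈ p.support) :
    (p.takeUntil d hd).takeUntil c hc = p.takeUntil c hc' := by
  have h1 : p = (p.takeUntil d hd).append (p.dropUntil d hd) := (Walk.take_spec p hd).symm
  exact ((takeUntil_congr h1 hc').trans
    (takeUntil_append_left _ hc)).symm

lemma dropUntil_eq_of_mem_takeUntil {b u s t : V} {p : G.Walk s t} (hu : u ∈ p.support)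
    (hb : b ∈ (p.takeUntil u hu).support) (hb' : b ∈ p.support) :
    p.dropUntil b hb' = ((p.takeUntil u hu).dropUntil b hb).append (p.dropUntil u hu) := by
  have h1 : p = (p.takeUntil u hu).append (p.dropUntil u hu) := (Walk.take_spec p hu).symm
  exact (dropUntil_congr h1 hb').trans (dropUntil_append_left _ hb)

lemma takeUntil_antisymm {c d s t : V} {p : G.Walk s t} (hc : c ∈ p.support)
    (hd : d ∈ p.support) (h1 : c ∈ (p.takeUntil d hd).support)
    (h2 : d ∈ (p.takeUntil c hc).support) : c = d := by
  have e1 := takeUntil_takeUntil hd h1 hc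
  have e2 := takeUntil_takeUntil hc h2 hd
  have l1 : (p.takeUntil c hc).length ≤ (p.takeUntil d hd).length := by
    rw [← e1]; exact Walk.length_takeUntil_le _ _
  have l2 : (p.takeUntil d hd).length ≤ (p.takeUntil c hc).length := by
    rw [← e2]; exact Walk.length_takeUntil_le _ _
  have spec := congrArg Walk.length (Walk.take_spec (p.takeUntil d hd) h1)
  rw [Walk.length_append, congrArg Walk.length e1] at spec
  have hz : ((p.takeUntil d hd).dropUntil c h1).length = 0 := by omega
  exact Walk.eq_of_length_eq_zero hz

/-- the two halves of a path only meet in the split vertex -/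
lemma junction {a s t : V} {p : G.Walk s t} (hp : p.IsPath) (ha : a ∈ p.support) {y : V}
    (h1 : y ∈ (p.takeUntil a ha).support) (h2 : y ∈ (p.dropUntil a ha).support) : y = a := by
  by_contra hne
  have hnd := hp.support_nodup
  have hsplit : p.support = (p.takeUntil a ha).support ++ (p.dropUntil a ha).support.tail := by
    conv_lhs => rw [← Walk.take_spec p ha]
    exact Walk.support_append _ _
  rw [hsplit, List.nodup_append] at hnd
  have h2' : y ∈ (p.dropUntil a ha).support.tail := by
    have := Walk.support_eq_cons (p.dropUntil a ha)
    rw [this] at h2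
    rcases List.mem_cons.mp h2 with h | h
    · exact absurd h hne
    · exact h
  exact hnd.2.2 y h1 y h2' rfl

lemma dropUntil_dropUntil {a c s t : V} {p : G.Walk s t} (hp : p.IsPath) (ha : a ∈ p.support)
    (hc : c ∈ (p.dropUntil a ha).support) (hc' : c ∈ p.support) :
    (p.dropUntil a ha).dropUntil c hc = p.dropUntil c hc' := by
  rcases eq_or_ne a c with rfl | hne
  · simp
  · have hcA : c ∉ (p.takeUntil a ha).support := fun hh => hne (junction hp ha hh hc).symm
    have h1 : p = (p.takeUntil a ha).append (p.dropUntil a ha) := (Walk.take_spec p ha).symm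
    exact ((dropUntil_congr h1 hc').trans (dropUntil_append_right _ hcA hc)).symm

lemma takeUntil_eq_of_mem_dropUntil {x v a t : V} {D : G.Walk a t} (hD : D.IsPath)
    (hv : v ∈ D.support) (hx : x ∈ (D.dropUntil v hv).support) (hne : x ≠ v)
    (hx' : x ∈ D.support) :
    D.takeUntil x hx' = (D.takeUntil v hv).append ((D.dropUntil v hv).takeUntil x hx) := by
  have hxA : x ∉ (D.takeUntil v hv).support := fun hh => hne (junction hD hv hh hx)
  have h1 : D = (D.takeUntil v hv).append (D.dropUntil v hv) := (Walk.take_spec D hv).symm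
  exact (takeUntil_congr h1 hx').trans (takeUntil_append_right _ hxA hx)

lemma IsPath.dropUntil_end {a x : V} {p : G.Walk a x} (hp : p.IsPath) (h : x ∈ p.support) :
    p.dropUntil x h = Walk.nil := by
  induction p with
  | nil => simp
  | @cons a a' x r p ih =>
      have hax : a ≠ x := by
        rintro rfl
        exact ((Walk.cons_isPath_iff _ _).mp hp).2 (Walk.end_mem_support p)
      rw [dropUntil_cons h hax]
      exact ih ((Walk.cons_isPath_iff _ _).mp hp).1 _

lemma dropUntil_takeUntil {x v a t : V} {D : G.Walk a t} (hD : D.IsPath)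
    (hv : v ∈ D.support) (hx : x ∈ (D.takeUntil v hv).support) (hxv : x ≠ v)
    (hxD : x ∈ D.support) (hv' : v ∈ (D.dropUntil x hxD).support) :
    (D.takeUntil v hv).dropUntil x hx = (D.dropUntil x hxD).takeUntil v hv' := by
  have hvnA : v ∉ (D.takeUntil x hxD).support := fun hh =>
    hxv (takeUntil_antisymm hxD hv hx hh)
  have e1 : D.takeUntil v hv
      = (D.takeUntil x hxD).append ((D.dropUntil x hxD).takeUntil v hv') := by
    have h1 : D = (D.takeUntil x hxD).append (D.dropUntil x hxD) := (Walk.take_spec D hxD).symm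
    exact (takeUntil_congr h1 hv).trans (takeUntil_append_right _ hvnA hv')
  have e2 := (dropUntil_congr e1 hx).trans
    (dropUntil_append_left _ (Walk.end_mem_support (D.takeUntil x hxD)))
  rw [IsPath.dropUntil_end (hD.takeUntil hxD) _] at e2
  rw [e2]
  rfl

lemma mem_dropUntil_of_not_mem_takeUntil {c a s t : V} {p : G.Walk s t} (ha : a ∈ p.support)
    (hc : c ∈ p.support) (h : c ∉ (p.takeUntil a ha).support) :
    c ∈ (p.dropUntil a ha).support := by
  rw [← Walk.take_spec p ha, Walk.mem_support_append_iff] at hc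
  tauto

lemma mem_takeUntil_of_not_mem_dropUntil {c a s t : V} {p : G.Walk s t} (ha : a ∈ p.support)
    (hc : c ∈ p.support) (h : c ∉ (p.dropUntil a ha).support) :
    c ∈ (p.takeUntil a ha).support := by
  rw [← Walk.take_spec p ha, Walk.mem_support_append_iff] at hc
  tauto

/-! ### weights -/

variable {w : Sym2 V → ℝ}

@[simp] lemma walkWeight_nil {u : V} : walkWeight G w (Walk.nil : G.Walk u u) = 0 := by
  simp [walkWeight]

@[simp] lemma walkWeight_cons {u v t : V} (h : G.Adj u v) (p : G.Walk v t) :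
    walkWeight G w (Walk.cons h p) = w s(u, v) + walkWeight G w p := by
  simp [walkWeight]

lemma walkWeight_append {u v t : V} (p : G.Walk u v) (q : G.Walk v t) :
    walkWeight G w (p.append q) = walkWeight G w p + walkWeight G w q := by
  simp [walkWeight, Walk.edges_append]

lemma walkWeight_reverse {u v : V} (p : G.Walk u v) :
    walkWeight G w p.reverse = walkWeight G w p := by
  simp [walkWeight, Walk.edges_reverse, List.sum_reverse]

lemma walkWeight_mapLe {H : SimpleGraph V} (hle : H ≤ G) {u v : V} (p : H.Walk u v) :
    walkWeight G w (p.mapLe hle) = walkWeight H w p := by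
  induction p with
  | nil => simp
  | cons h p ih =>
      simp only [Walk.mapLe, Walk.map_cons] at *
      simp [walkWeight] at ih ⊢

lemma support_mapLe {H : SimpleGraph V} (hle : H ≤ G) {u v : V} (p : H.Walk u v) :
    (p.mapLe hle).support = p.support := by
  induction p with
  | nil => rfl
  | cons h p ih =>
      simp only [Walk.mapLe, Walk.map_cons, Walk.support_cons] at *
      rw [ih]

lemma walkWeight_negSub_nonpos {u v : V} (p : (negSub G w).Walk u v) :
    walkWeight (negSub G w) w p ≤ 0 := by
  induction p with
  | nil => simp
  | @cons u x v h p ih =>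
      have := And.right h
      rw [walkWeight_cons]
      linarith

lemma walkWeight_negSub_neg {u x v : V} (h : (negSub G w).Adj u x) (p : (negSub G w).Walk x v) :
    walkWeight (negSub G w) w (Walk.cons h p) < 0 := by
  have h2 := And.right h
  have := walkWeight_negSub_nonpos p
  rw [walkWeight_cons]
  linarith

/-! ### paths/cycles combinatorics -/

lemma start_not_mem_support_tail {u v : V} {p : G.Walk u v} (hp : p.IsPath) :
    u ∉ p.support.tail := by
  have h := hp.support_nodup
  rw [Walk.support_eq_cons] at h
  exact (List.nodup_cons.mp h).1

lemma length_eq_one_of_mem_edges {a b : V} {p : G.Walk a b} (hp : p.IsPath)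
    (he : s(a, b) ∈ p.edges) : p.length = 1 := by
  cases p with
  | nil => simp at he
  | @cons a x b h p' =>
      rw [Walk.edges_cons, List.mem_cons] at he
      rcases he with he | he
      · have hbx : b = x := Sym2.congr_right.mp he
        subst hbx
        have : p' = Walk.nil := by
          have := ((Walk.cons_isPath_iff _ _).mp hp).1
          exact (Walk.isPath_iff_eq_nil).mp this
        subst this
        simp
      · exfalso
        exact ((Walk.cons_isPath_iff _ _).mp hp).2 (Walk.fst_mem_support_of_mem_edges p' he)

lemma cycle_two_paths {a b : V} {p r : G.Walk a b} (hp : p.IsPath) (hr : r.IsPath)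
    (hab : a ≠ b) (hdisj : ∀ y ∈ p.support, y ∈ r.support → y = a ∨ y = b)
    (hlen : 2 ≤ p.length ∨ 2 ≤ r.length) : (p.append r.reverse).IsCycle := by
  rw [Walk.isCycle_def]
  refine ⟨?_, ?_, ?_⟩
  · rw [Walk.isTrail_def, Walk.edges_append, Walk.edges_reverse, List.nodup_append]
    refine ⟨hp.isTrail.edges_nodup, List.nodup_reverse.mpr hr.isTrail.edges_nodup, ?_⟩
    intro e hep e' her' hee'
    subst hee'
    have her : e ∈ r.edges := List.mem_reverse.mp her'
    clear her'
    induction e using Sym2.ind with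
    | _ c d =>
        have hcp := Walk.fst_mem_support_of_mem_edges p hep
        have hdp := Walk.snd_mem_support_of_mem_edges p hep
        have hcr := Walk.fst_mem_support_of_mem_edges r her
        have hdr := Walk.snd_mem_support_of_mem_edges r her
        have hadj : G.Adj c d := Walk.adj_of_mem_edges p hep
        have hone : p.length = 1 ∧ r.length = 1 := by
          rcases hdisj c hcp hcr with rfl | rfl <;> rcases hdisj d hdp hdr with rfl | rfl
          · exact absurd rfl hadj.ne
          · exact ⟨length_eq_one_of_mem_edges hp hep, length_eq_one_of_mem_edges hr her⟩
          · rw [Sym2.eq_swap] at hep her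
            exact ⟨length_eq_one_of_mem_edges hp hep, length_eq_one_of_mem_edges hr her⟩
          · exact absurd rfl hadj.ne
        omega
  · intro hnil
    have := congrArg Walk.length hnil
    rw [Walk.length_append] at this
    simp at this
    exact hab (Walk.eq_of_length_eq_zero (Walk.nil_iff_length_eq.mp this.1))
  · rw [Walk.tail_support_append, List.nodup_append]
    refine ⟨List.Nodup.sublist (List.tail_sublist _) hp.support_nodup,
      List.Nodup.sublist (List.tail_sublist _) hr.reverse.support_nodup, ?_⟩
    intro y hy1 y' hy2 hyy'
    subst hyy'
    have hyp : y ∈ p.support := List.mem_of_mem_tail hy1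
    have hyr : y ∈ r.support := by
      have := List.mem_of_mem_tail hy2
      rw [Walk.support_reverse, List.mem_reverse] at this
      exact this
    rcases hdisj y hyp hyr with rfl | rfl
    · exact start_not_mem_support_tail hp hy1
    · exact start_not_mem_support_tail hr.reverse hy2

/-- first place a walk meets a list of vertices -/
lemma firstMeet {H : SimpleGraph V} {x v : V} (r : H.Walk x v) :
    ∀ L : List V, x ∉ L → v ∈ L →
      ∃ (b : V) (S : H.Walk x b) (T : H.Walk b v), r = S.append T ∧ b ∈ L ∧
        (∀ y ∈ S.support, y ∈ L → y = b) := by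
  induction r with
  | nil => exact fun L hx hv => absurd hv hx
  | @cons x x' v h r' ih =>
      intro L hx hv
      by_cases hx' : x' ∈ L
      · refine ⟨x', Walk.cons h Walk.nil, r', rfl, hx', ?_⟩
        intro y hy hyL
        simp only [Walk.support_cons, Walk.support_nil, List.mem_cons,
          List.mem_singleton] at hy
        rcases hy with rfl | rfl | h
        · exact absurd hyL hx
        · rfl
        · simp at h
      · obtain ⟨b, S, T, heq, hbL, hprop⟩ := ih L hx' hv
        refine ⟨b, Walk.cons h S, T, by rw [Walk.cons_append, heq], hbL, ?_⟩
        intro y hy hyL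
        rw [Walk.support_cons, List.mem_cons] at hy
        rcases hy with rfl | hy
        · exact absurd hyL hx
        · exact hprop y hy hyL

/-- The exchange argument: a negative-weight path between two vertices of a minimum
path, internally disjoint from it, is impossible. -/
lemma exchange {w : Sym2 V → ℝ} (hw : Conservative G w) {s t : V} {P : G.Walk s t}
    (hP : P.IsPath)
    (hmin : ∀ Q : G.Walk s t, Q.IsPath → walkWeight G w P ≤ walkWeight G w Q)
    {a b : V} (hab : a ≠ b) (ha : a ∈ P.support) (hb : b ∈ (P.dropUntil a ha).support)
    (S : G.Walk a b) (hS : S.IsPath)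
    (hdisj : ∀ y ∈ S.support, y ∈ P.support → y = a ∨ y = b)
    (hSw : walkWeight G w S < 0)
    (hlen : 2 ≤ S.length ∨ 2 ≤ ((P.dropUntil a ha).takeUntil b hb).length) : False := by
  set A := P.takeUntil a ha with hA
  set D := P.dropUntil a ha with hD
  set M := D.takeUntil b hb with hM
  set D2 := D.dropUntil b hb with hD2
  have hApath : A.IsPath := hP.takeUntil ha
  have hDpath : D.IsPath := hP.dropUntil ha
  have hMpath : M.IsPath := hDpath.takeUntil hb
  have hD2path : D2.IsPath := hDpath.dropUntil hb
  -- support splittings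
  have hsplit1 : P.support = A.support ++ D.support.tail := by
    conv_lhs => rw [← Walk.take_spec P ha]
    exact Walk.support_append _ _
  have hsplit2 : D.support.tail = M.support.tail ++ D2.support.tail := by
    conv_lhs => rw [← Walk.take_spec D hb]
    exact Walk.tail_support_append _ _
  have hnd1 := hsplit1 ▸ hP.support_nodup
  rw [List.nodup_append] at hnd1
  have hndD := hDpath.support_nodup
  -- the common piece of notation
  have hMsub : M.support ⊆ P.support := fun y hy =>
    Walk.support_dropUntil_subset P ha (Walk.support_takeUntil_subset D hb hy)
  have hD2tsub : D2.support.tail ⊆ D.support.tail := fun y hy => by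
    rw [hsplit2]; exact List.mem_append_right _ hy
  -- the cycle
  have hCyc : (M.append S.reverse).IsCycle := by
    refine cycle_two_paths hMpath hS hab (fun y hyM hyS => hdisj y hyS (hMsub hyM)) ?_
    tauto
  have hCw := hw a _ hCyc
  rw [walkWeight_append, walkWeight_reverse] at hCw
  -- the replacement walk
  set Q := A.append (S.append D2) with hQdef
  have hQsup : Q.support = A.support ++ (S.support.tail ++ D2.support.tail) := by
    rw [hQdef, Walk.support_append, Walk.tail_support_append]
  have hQ : Q.IsPath := by
    rw [Walk.isPath_def, hQsup, List.nodup_append]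
    refine ⟨hApath.support_nodup, ?_, ?_⟩
    · rw [List.nodup_append]
      refine ⟨List.Nodup.sublist (List.tail_sublist _) hS.support_nodup,
        List.Nodup.sublist (List.tail_sublist _) hD2path.support_nodup, ?_⟩
      intro y hyS y' hyD2 hyy'
      subst hyy'
      have hyP : y ∈ P.support := by
        rw [hsplit1]
        exact List.mem_append_right _ (hD2tsub hyD2)
      rcases hdisj y (List.mem_of_mem_tail hyS) hyP with rfl | rfl
      · -- a ∈ D2.support.tail ⊆ D.support.tail, but D starts at a
        exact start_not_mem_support_tail hDpath (hD2tsub hyD2)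
      · exact start_not_mem_support_tail hD2path hyD2
    · intro y hyA y' hy2 hyy'
      subst hyy'
      rw [List.mem_append] at hy2
      rcases hy2 with hyS | hyD2
      · have hyP : y ∈ P.support := Walk.support_takeUntil_subset P ha hyA
        rcases hdisj y (List.mem_of_mem_tail hyS) hyP with rfl | rfl
        · exact start_not_mem_support_tail hS hyS
        · exact hab (junction hP ha hyA hb).symm
      · exact hnd1.2.2 y hyA y (hD2tsub hyD2) rfl
  -- weights
  have e1 := congrArg (walkWeight G w) (Walk.take_spec P ha)
  rw [walkWeight_append] at e1
  have e2 := congrArg (walkWeight G w) (Walk.take_spec D hb)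
  rw [walkWeight_append] at e2
  have e3 : walkWeight G w Q = walkWeight G w A + (walkWeight G w S + walkWeight G w D2) := by
    rw [hQdef, walkWeight_append, walkWeight_append]
  have := hmin Q hQ
  rw [e3, ← e1, ← e2] at this
  linarith

lemma walk_length_one_eq {u v : V} (p : G.Walk u v) (h : p.length = 1) (hadj : G.Adj u v) :
    p = Walk.cons hadj Walk.nil := by
  cases p with
  | nil => simp at h
  | cons h' p' =>
      cases p' with
      | nil => rfl
      | cons h'' p'' => simp [Walk.length_cons] at h

lemma main_aux {w : Sym2 V → ℝ} (hw : Conservative G w) {s t : V} {P : G.Walk s t}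
    (hP : P.IsPath)
    (hmin : ∀ Q : G.Walk s t, Q.IsPath → walkWeight G w P ≤ walkWeight G w Q) :
    ∀ n : ℕ, ∀ u v : V, u ≠ v → ∀ (hu : u ∈ P.support) (hv : v ∈ (P.dropUntil u hu).support)
      (q : (negSub G w).Walk u v), q.IsPath → q.length ≤ n →
      (P.dropUntil u hu).takeUntil v hv = q.mapLe negSub_le := by
  intro n
  induction n with
  | zero =>
      intro u v huv hu hv q hq hlen
      cases q with
      | nil => exact absurd rfl huv
      | cons h p => simp at hlen
  | succ n ih =>
      intro u v huv hu hv q hq hlen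
      cases q with
      | nil => exact absurd rfl huv
      | @cons _ x _ e q₁ =>
        have hqp := (Walk.cons_isPath_iff _ _).mp hq
        have hux : u ≠ x := (And.left e).ne
        rcases eq_or_ne x v with rfl | hxv
        · -- base case: single edge
          have hq1nil : q₁ = Walk.nil := (Walk.isPath_iff_eq_nil).mp hqp.1
          subst hq1nil
          set R := (P.dropUntil u hu).takeUntil x hv with hR
          have hRlen0 : R.length ≠ 0 := fun h0 => huv (Walk.eq_of_length_eq_zero h0)
          by_cases hr1 : R.length = 1
          · rw [walk_length_one_eq R hr1 (And.left e)]
            rfl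
          · exfalso
            have h2 : 2 ≤ R.length := by omega
            refine exchange hw hP hmin huv hu hv (Walk.cons (And.left e) Walk.nil) ?_ ?_ ?_ ?_
            · simp [huv]
            · intro y hy hyP
              simp [Walk.support_cons] at hy
              tauto
            · have := And.right e
              simp only [walkWeight_cons, walkWeight_nil, add_zero]
              exact this
            · right; exact h2
        · -- q has length ≥ 2
          have hq1len : 1 ≤ q₁.length := by
            have hnn : ¬ q₁.Nil := Walk.not_nil_of_ne hxv
            rw [Walk.not_nil_iff_lt_length] at hnn
            omega
          have hlen1 : q₁.length ≤ n := by
            simp only [Walk.length_cons] at hlen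
            omega
          have hn1 : 1 ≤ n := le_trans hq1len hlen1
          set D := P.dropUntil u hu with hDdef
          by_cases hx1 : x ∈ (D.takeUntil v hv).support
          · -- Case A1 : x lies on P[u,v]
            have hxD : x ∈ D.support := Walk.support_takeUntil_subset D hv hx1
            have hxP : x ∈ P.support := Walk.support_dropUntil_subset P hu hxD
            have step1 := ih u x hux hu hxD (Walk.cons e Walk.nil) (by simp [hux]) (by simpa using hn1)
            have hdec := dropUntil_eq_of_mem_takeUntil hv hx1 hxD
            have hv2' : v ∈ (D.dropUntil x hxD).support := by
              rw [hdec, Walk.mem_support_append_iff]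
              exact Or.inl (Walk.end_mem_support _)
            have hdd := dropUntil_dropUntil hP hu hxD hxP
            have hv2 : v ∈ (P.dropUntil x hxP).support := hdd ▸ hv2'
            have step2 := ih x v hxv hxP hv2 q₁ hqp.1 hlen1
            have hmid := dropUntil_takeUntil (hP.dropUntil hu) hv hx1 hxv hxD hv2'
            have step3 : (D.dropUntil x hxD).takeUntil v hv2' = q₁.mapLe negSub_le :=
              (takeUntil_congr hdd hv2').trans step2
            calc (D.takeUntil v hv)
                = ((D.takeUntil v hv).takeUntil x hx1).append ((D.takeUntil v hv).dropUntil x hx1) :=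
                  (Walk.take_spec _ hx1).symm
              _ = ((Walk.cons e Walk.nil).mapLe negSub_le).append (q₁.mapLe negSub_le) := by
                  rw [takeUntil_takeUntil hv hx1 hxD, hmid, step1, step3]
              _ = (Walk.cons e q₁).mapLe negSub_le := rfl
          · by_cases hxP : x ∈ P.support
            · by_cases hxD : x ∈ D.support
              · -- Case A2a : x lies on P strictly after v
                exfalso
                have step1 := ih u x hux hu hxD (Walk.cons e Walk.nil) (by simp [hux]) (by simpa using hn1)
                have hxdrop : x ∈ (D.dropUntil v hv).support :=
                  mem_dropUntil_of_not_mem_takeUntil hv hxD hx1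
                have hdec := takeUntil_eq_of_mem_dropUntil (hP.dropUntil hu) hv hxdrop hxv hxD
                have hvmem : v ∈ (D.takeUntil x hxD).support := by
                  rw [hdec, Walk.mem_support_append_iff]
                  exact Or.inl (Walk.end_mem_support _)
                rw [step1] at hvmem
                simp only [Walk.mapLe, Walk.support_map, Walk.support_cons, Walk.support_nil,
                  Hom.ofLE_apply, List.map_cons, List.map_nil, List.mem_cons,
                  List.mem_singleton, List.not_mem_nil, or_false] at hvmem
                rcases hvmem with h | h
                · exact huv h.symm
                · exact hxv h.symm
              · -- Case A2b : x lies on P strictly before u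
                exfalso
                have hxA : x ∈ (P.takeUntil u hu).support :=
                  mem_takeUntil_of_not_mem_dropUntil hu hxP hxD
                have hdec := dropUntil_eq_of_mem_takeUntil hu hxA hxP
                have hu2 : u ∈ (P.dropUntil x hxP).support := by
                  rw [hdec, Walk.mem_support_append_iff]
                  exact Or.inl (Walk.end_mem_support _)
                have hv2 : v ∈ (P.dropUntil x hxP).support := by
                  rw [hdec, Walk.mem_support_append_iff]
                  exact Or.inr hv
                have step2 := ih x v hxv hxP hv2 q₁ hqp.1 hlen1
                have hdd := dropUntil_dropUntil hP hxP hu2 hu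
                have hvdrop : v ∈ ((P.dropUntil x hxP).dropUntil u hu2).support := by
                  rw [hdd]; exact hv
                have hdec2 := takeUntil_eq_of_mem_dropUntil (hP.dropUntil hxP) hu2 hvdrop
                  huv.symm hv2
                have humem : u ∈ ((P.dropUntil x hxP).takeUntil v hv2).support := by
                  rw [hdec2, Walk.mem_support_append_iff]
                  exact Or.inl (Walk.end_mem_support _)
                rw [step2] at humem
                have : u ∈ q₁.support := by
                  rwa [support_mapLe] at humem
                exact hqp.2 this
            · -- Case B : x is not on P at all
              exfalso
              have hvP : v ∈ P.support := Walk.support_dropUntil_subset P hu hv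
              obtain ⟨b, S₁, T₁, hq1eq, hbP, hmeet⟩ := firstMeet q₁ P.support hxP hvP
              have hbq₁ : b ∈ q₁.support := by
                rw [hq1eq, Walk.mem_support_append_iff]
                exact Or.inl (Walk.end_mem_support _)
              have hbu : b ≠ u := fun hh => hqp.2 (hh ▸ hbq₁)
              have hS₁path : S₁.IsPath := by
                have hh := hqp.1
                rw [hq1eq] at hh
                exact hh.of_append_left
              have hS₁sub : S₁.support ⊆ q₁.support := fun y hy => by
                rw [hq1eq, Walk.mem_support_append_iff]
                exact Or.inl hy
              have hSpath : (Walk.cons e S₁).IsPath := by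
                rw [Walk.cons_isPath_iff]
                exact ⟨hS₁path, fun hh => hqp.2 (hS₁sub hh)⟩
              set S' := (Walk.cons e S₁).mapLe (negSub_le (w := w)) with hS'def
              have hS'path : S'.IsPath := hSpath.mapLe _
              have hS'sup : S'.support = u :: S₁.support := by
                rw [hS'def, support_mapLe]
                simp
              have hdisj : ∀ y ∈ S'.support, y ∈ P.support → y = u ∨ y = b := by
                intro y hy hyP
                rw [hS'sup, List.mem_cons] at hy
                rcases hy with rfl | hy
                · exact Or.inl rfl
                · exact Or.inr (hmeet y hy hyP)
              have hS'w : walkWeight G w S' < 0 := by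
                rw [hS'def, walkWeight_mapLe]
                exact walkWeight_negSub_neg e S₁
              have hxb : x ≠ b := fun hh => hxP (hh ▸ hbP)
              have hS'len : 2 ≤ S'.length := by
                have h1 : 1 ≤ S₁.length := by
                  have hnn : ¬ S₁.Nil := Walk.not_nil_of_ne hxb
                  rw [Walk.not_nil_iff_lt_length] at hnn
                  omega
                rw [hS'def]
                simp only [Walk.mapLe, Walk.length_map, Walk.length_cons]
                omega
              by_cases hbD : b ∈ D.support
              · exact exchange hw hP hmin hbu.symm hu hbD S' hS'path hdisj hS'w (Or.inl hS'len)
              · have hbA : b ∈ (P.takeUntil u hu).support :=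
                  mem_takeUntil_of_not_mem_dropUntil hu hbP hbD
                have hdec := dropUntil_eq_of_mem_takeUntil hu hbA hbP
                have hu3 : u ∈ (P.dropUntil b hbP).support := by
                  rw [hdec, Walk.mem_support_append_iff]
                  exact Or.inl (Walk.end_mem_support _)
                refine exchange hw hP hmin hbu hbP hu3 S'.reverse hS'path.reverse ?_ ?_
                  (Or.inl ?_)
                · intro y hy hyP
                  rw [Walk.support_reverse, List.mem_reverse] at hy
                  exact (hdisj y hy hyP).symm
                · rw [walkWeight_reverse]; exact hS'w
                · rw [Walk.length_reverse]; exact hS'len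

end NegTreeAux

/-- Let `P` be a minimum-weight `(s,t)`-path in a graph with conservative weights, and
let `u, v` lie on `P` and in the same connected component `T` of the subgraph of
negative edges (hence a tree).  If `u` occurs on `P` before `v`, then the subpath
`P[u,v]` coincides with the unique tree path `T[u,v]`. -/
theorem min_path_agrees_with_negative_tree {V : Type*} [DecidableEq V]
    (G : SimpleGraph V) (w : Sym2 V → ℝ) (hw : Conservative G w)
    {s t : V} (P : G.Walk s t) (hP : P.IsPath)
    (hmin : ∀ Q : G.Walk s t, Q.IsPath → walkWeight G w P ≤ walkWeight G w Q)
    {u v : V} (huv : u ≠ v)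
    (hreach : (negSub G w).Reachable u v)
    (hu : u ∈ P.support) (hv : v ∈ (P.dropUntil u hu).support)
    (q : (negSub G w).Walk u v) (hq : q.IsPath) :
    (P.dropUntil u hu).takeUntil v hv = q.mapLe (show negSub G w ≤ G from fun _ _ h => And.left h) := by
  exact NegTreeAux.main_aux hw hP hmin q.length u v huv hu hv q hq le_rfl
end

section
/- Let G be a graph with conservative weights whose negative edges form trees T ∈ 𝒯 (connected components of the subgraph of negative edges). Define a T-leap as a path L whose intersection with the vertex set of T consists exactly of its two endpoints and that shares no edge with T; a T-leap with endpoints a,b is parity-changing if |L| + |T[a,b]| is odd. If Q is a minimum-weight odd (s,t)-path containing the fewest leaps among all minimum-weight odd (s,t)-paths, then either Q contains no leap, or Q contains at least one parity-changing leap. -/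
open SimpleGraph

set_option linter.unusedSectionVars false
set_option maxHeartbeats 1600000

/-- `v` is a vertex of some negative tree. -/
def NegTreeVertex {V : Type*} (G : SimpleGraph V) (w : Sym2 V → ℝ) (v : V) : Prop :=
  ∃ x, (negSub G w).Adj v x

/-- `L` is a `T`-leap, where `T` is the negative tree containing its endpoints `a`,`b`:
`L` is a path, `a` and `b` are distinct vertices of the same negative tree `T`,
the only vertices of `L` belonging to `T` are `a` and `b`, and `L` shares no edge
with `T`. -/
def IsLeap {V : Type*} (G : SimpleGraph V) (w : Sym2 V → ℝ) {a b : V}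
    (L : G.Walk a b) : Prop :=
  a ≠ b ∧ L.IsPath ∧ NegTreeVertex G w a ∧ NegTreeVertex G w b ∧
  (negSub G w).Reachable a b ∧
  (∀ v ∈ L.support, NegTreeVertex G w v → (negSub G w).Reachable a v → v = a ∨ v = b) ∧
  (∀ e ∈ L.edges, ¬ (e ∈ (negSub G w).edgeSet ∧ ∃ u ∈ e, (negSub G w).Reachable a u))

/-- `L` is a leap occurring as a contiguous subpath of `Q`. -/
def IsLeapOn {V : Type*} (G : SimpleGraph V) (w : Sym2 V → ℝ) {s t : V}
    (Q : G.Walk s t) (a b : V) (L : G.Walk a b) : Prop :=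
  IsLeap G w L ∧ ∃ (W₁ : G.Walk s a) (W₂ : G.Walk b t), Q = W₁.append (L.append W₂)

/-- A leap `L` with endpoints `a`,`b` is parity-changing if the cycle it induces with
the tree path `T[a,b]` is odd, i.e. `|L| + |T[a,b]|` is odd. -/
def IsParityChanging {V : Type*} (G : SimpleGraph V) (w : Sym2 V → ℝ) {a b : V}
    (L : G.Walk a b) : Prop :=
  ∃ p : (negSub G w).Walk a b, p.IsPath ∧ Odd (L.length + p.length)

/-- The number of leaps on `Q` (a leap on a path is determined by its endpoint pair). -/
noncomputable def numLeaps {V : Type*} (G : SimpleGraph V) (w : Sym2 V → ℝ) {s t : V}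
    (Q : G.Walk s t) : ℕ :=
  Set.ncard {ab : V × V | ∃ L : G.Walk ab.1 ab.2, IsLeapOn G w Q ab.1 ab.2 L}

section AuxLemmas

variable {V : Type*} [DecidableEq V] {G : SimpleGraph V} {w : Sym2 V → ℝ}

private lemma list_sum_neg : ∀ (l : List ℝ), l ≠ [] → (∀ x ∈ l, x < 0) → l.sum < 0 := by
  intro l
  induction l with
  | nil => simp
  | cons a t ih =>
    intro _ h
    rcases t with _ | ⟨b, t'⟩
    · simpa using h a (by simp)
    · have h1 := ih (by simp) (fun x hx => h x (by simp [hx]))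
      have ha := h a (by simp)
      simp only [List.sum_cons] at *
      linarith

lemma walkWeight_append {u v x : V} (p : G.Walk u v) (q : G.Walk v x) :
    walkWeight G w (p.append q) = walkWeight G w p + walkWeight G w q := by
  simp [walkWeight, Walk.edges_append]

lemma negSub_edges_sub : ∀ e ∈ (negSub G w).edgeSet, e ∈ G.edgeSet := by
  intro e
  induction e using Sym2.ind with
  | _ x y => exact fun h => h.1

lemma weight_neg_of_mem_negSub {e : Sym2 V} (h : e ∈ (negSub G w).edgeSet) : w e < 0 := by
  induction e using Sym2.ind with
  | _ x y => exact h.2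

lemma walkWeight_transfer {u v : V} (p : (negSub G w).Walk u v) :
    walkWeight G w (p.transfer G (fun e he => negSub_edges_sub e (p.edges_subset_edgeSet he)))
      = (p.edges.map w).sum := by
  simp [walkWeight, Walk.edges_transfer]

lemma negSub_acyclic (hw : Conservative G w) : (negSub G w).IsAcyclic := by
  intro v c hc
  have hc' : (c.transfer G (fun e he => negSub_edges_sub e (c.edges_subset_edgeSet he))).IsCycle :=
    hc.transfer _
  have h0 := hw v _ hc'
  rw [walkWeight_transfer] at h0
  have hne : c.edges ≠ [] := by
    cases c with
    | nil => exact absurd rfl hc.ne_nil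
    | cons h q => simp
  have hall : ∀ x ∈ c.edges.map w, x < 0 := by
    intro x hx
    obtain ⟨e, he, rfl⟩ := List.mem_map.mp hx
    exact weight_neg_of_mem_negSub (c.edges_subset_edgeSet he)
  have hlt : (c.edges.map w).sum < 0 := list_sum_neg _ (by simpa using hne) hall
  linarith

lemma eq_of_length_zero {u v : V} (p : G.Walk u v) (h : p.length = 0) : u = v := by
  cases p with
  | nil => rfl
  | cons hadj q => simp at h

lemma support_getLast {u v : V} (p : G.Walk u v) (hne : p.support ≠ []) :
    p.support.getLast hne = v := by
  induction p with
  | nil => rfl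
  | cons h q ih =>
    simp only [Walk.support_cons]
    rw [List.getLast_cons (Walk.support_ne_nil q)]
    exact ih _

lemma first_edge_of_start_mem {u v : V} (P : G.Walk u v) (hP : P.IsPath) {e : Sym2 V}
    (he : e ∈ P.edges) (hu : u ∈ e) :
    ∃ (c : V) (h : G.Adj u c) (P' : G.Walk c v), P = Walk.cons h P' ∧ e = s(u, c) := by
  cases P with
  | nil => simp at he
  | cons h P' =>
    rename_i c
    refine ⟨c, h, P', rfl, ?_⟩
    rw [Walk.edges_cons] at he
    rcases List.mem_cons.mp he with he1 | he2
    · exact he1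
    · exfalso
      induction e using Sym2.ind with
      | _ a b =>
        rcases Sym2.mem_iff.mp hu with rfl | rfl
        · exact ((Walk.cons_isPath_iff h P').mp hP).2 (P'.fst_mem_support_of_mem_edges he2)
        · exact ((Walk.cons_isPath_iff h P').mp hP).2 (P'.snd_mem_support_of_mem_edges
            (by rwa [Sym2.eq_swap] at he2))

lemma path_eq_of_edges_subset {x y : V} (P R : G.Walk x y) (hP : P.IsPath) (hR : R.IsPath)
    (hsub : ∀ e ∈ R.edges, e ∈ P.edges) : P = R := by
  induction R with
  | nil => exact (Walk.isPath_iff_eq_nil (p := P)).mp hP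
  | @cons x z y h R' ih =>
    obtain ⟨c, hadj, P', rfl, hec⟩ := first_edge_of_start_mem P hP
      (hsub s(x,z) (by simp)) (by simp)
    have hz : z = c := by
      rcases Sym2.eq_iff.mp hec with ⟨_, rfl⟩ | ⟨h1, h2⟩
      · rfl
      · subst h2; exact absurd h (G.irrefl)
    subst hz
    have hR'path : R'.IsPath := ((Walk.cons_isPath_iff h R').mp hR).1
    have hP'path : P'.IsPath := ((Walk.cons_isPath_iff hadj P').mp hP).1
    have : P' = R' := by
      apply ih P' hP'path hR'path
      intro e heR
      have heP : e ∈ (Walk.cons hadj P').edges := hsub e (by simp [heR])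
      rcases List.mem_cons.mp (by simpa using heP) with he1 | he2
      · exfalso
        subst he1
        have hx : x ∈ R'.support := by
          apply R'.fst_mem_support_of_mem_edges (t := x) (u := z)
          exact heR
        exact ((Walk.cons_isPath_iff h R').mp hR).2 hx
      · exact he2
    subst this
    rfl

lemma adj_path_parity {H : SimpleGraph V} (hH : H.IsAcyclic) {x z y : V} (hxz : H.Adj x z)
    (R : H.Walk x y) (R₂ : H.Walk z y) (hR : R.IsPath) (hR₂ : R₂.IsPath) :
    Odd (R.length + R₂.length) := by
  rw [Nat.odd_iff]
  have pu := isAcyclic_iff_path_unique.mp hH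
  by_cases hz : z ∈ R.support
  · have hsplit := R.take_spec hz
    have h1 : (R.takeUntil z hz).IsPath := hR.takeUntil hz
    have h2 : (R.dropUntil z hz).IsPath := hR.dropUntil hz
    have e1 : R.takeUntil z hz = Walk.cons hxz Walk.nil := by
      have := pu ⟨R.takeUntil z hz, h1⟩ ⟨Walk.cons hxz Walk.nil, by
        simp [Walk.cons_isPath_iff, hxz.ne]⟩
      exact congrArg Subtype.val this
    have e2 : R.dropUntil z hz = R₂ := by
      have := pu ⟨R.dropUntil z hz, h2⟩ ⟨R₂, hR₂⟩
      exact congrArg Subtype.val this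
    have hlen : R.length = (R.takeUntil z hz).length + (R.dropUntil z hz).length := by
      conv_lhs => rw [← hsplit]
      exact Walk.length_append _ _
    rw [e1, e2] at hlen
    simp only [Walk.length_cons, Walk.length_nil] at hlen
    omega
  · have hpath : (Walk.cons hxz.symm R).IsPath := by
      rw [Walk.cons_isPath_iff]
      exact ⟨hR, hz⟩
    have := pu ⟨Walk.cons hxz.symm R, hpath⟩ ⟨R₂, hR₂⟩
    have e : Walk.cons hxz.symm R = R₂ := congrArg Subtype.val this
    have : R₂.length = R.length + 1 := by rw [← e]; simp
    omega

lemma walk_path_parity {H : SimpleGraph V} (hH : H.IsAcyclic) {x y : V} (W : H.Walk x y)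
    (R : H.Walk x y) (hR : R.IsPath) : W.length % 2 = R.length % 2 := by
  induction W with
  | nil =>
    have : R = Walk.nil := (Walk.isPath_iff_eq_nil (p := R)).mp hR
    subst this; rfl
  | @cons x z y h W' ih =>
    have hodd := adj_path_parity hH h R W'.bypass hR W'.bypass_isPath
    have := ih W'.bypass W'.bypass_isPath
    rw [Nat.odd_iff] at hodd
    simp only [Walk.length_cons]
    omega

lemma exists_first_split (pred : V → Prop) {u v : V} (p : G.Walk u v)
    (hp : ∃ z ∈ p.support, pred z) :
    ∃ (z : V) (S : G.Walk u z) (Rst : G.Walk z v), p = S.append Rst ∧ pred z ∧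
      ∀ w ∈ S.support, pred w → w = z := by
  induction p with
  | nil =>
    obtain ⟨z, hz, hpz⟩ := hp
    rw [Walk.mem_support_nil_iff] at hz
    subst hz
    exact ⟨z, Walk.nil, Walk.nil, rfl, hpz, by simp⟩
  | @cons u c v h q ih =>
    by_cases hu : pred u
    · exact ⟨u, Walk.nil, Walk.cons h q, rfl, hu, by simp⟩
    · have hp' : ∃ z ∈ q.support, pred z := by
        obtain ⟨z, hz, hpz⟩ := hp
        rw [Walk.support_cons, List.mem_cons] at hz
        rcases hz with rfl | hz
        · exact absurd hpz hu
        · exact ⟨z, hz, hpz⟩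
      obtain ⟨z, S', R', heq, hz, hS'⟩ := ih hp'
      refine ⟨z, Walk.cons h S', R', by rw [Walk.cons_append, heq], hz, ?_⟩
      intro w hw hpw
      rw [Walk.support_cons, List.mem_cons] at hw
      rcases hw with rfl | hw
      · exact absurd hpw hu
      · exact hS' w hw hpw

lemma reachable_of_mem_support {H : SimpleGraph V} {x y v : V} (p : H.Walk x y)
    (hv : v ∈ p.support) : H.Reachable x v := ⟨p.takeUntil v hv⟩

lemma negtree_of_mem_support : ∀ {x y : V} (p : (negSub G w).Walk x y), 1 ≤ p.length →
    ∀ v ∈ p.support, NegTreeVertex G w v := by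
  intro x y p
  induction p with
  | nil => intro h; simp at h
  | cons h q ih =>
    intro _ v hv
    rw [Walk.support_cons, List.mem_cons] at hv
    rcases hv with rfl | hv
    · exact ⟨_, h⟩
    · cases q with
      | nil =>
        rw [Walk.mem_support_nil_iff] at hv
        subst hv
        exact ⟨_, h.symm⟩
      | cons h' q' => exact ih (by simp) v hv

lemma support_prefix {s x t : V} (A : G.Walk s x) (B : G.Walk x t) :
    A.support = ((A.append B).support).take (A.length + 1) := by
  rw [Walk.support_append, ← Walk.length_support, List.take_left]

lemma edges_prefix {s x t : V} (A : G.Walk s x) (B : G.Walk x t) :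
    A.edges = ((A.append B).edges).take A.length := by
  rw [Walk.edges_append, ← Walk.length_edges, List.take_left]

lemma getElem_support_of_prefix {s x t : V} (A : G.Walk s x) (B : G.Walk x t)
    (h : A.length < (A.append B).support.length) :
    (A.append B).support[A.length] = x := by
  have h2 : A.support[A.length]'(by rw [Walk.length_support]; omega) = x := by
    have h3 := support_getLast A (Walk.support_ne_nil A)
    rw [List.getLast_eq_getElem] at h3
    simp only [Walk.length_support, Nat.add_sub_cancel] at h3
    exact h3
  have hlt : A.length < A.support.length := by rw [Walk.length_support]; omega
  have h4 := List.getElem_of_eq (Walk.support_append A B) (i := A.length) h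
  rw [h4]
  rw [List.getElem_append_left hlt]
  exact h2

lemma prefix_length_le {s x c₀ t : V} (pred : V → Prop)
    {A : G.Walk s x} {B : G.Walk x t} {C : G.Walk s c₀} {D : G.Walk c₀ t}
    (hQpath : (A.append B).IsPath) (hQeq : A.append B = C.append D)
    (hA : ∀ u ∈ A.support, pred u → u = x) (hc : pred c₀) :
    A.length ≤ C.length := by
  by_contra hlt
  push_neg at hlt
  have hlenQ : C.length < (A.append B).support.length := by
    rw [Walk.length_support, Walk.length_append]
    omega
  have hlenQ2 : A.length < (A.append B).support.length := by
    rw [Walk.length_support, Walk.length_append]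
    omega
  have hgC : (A.append B).support[C.length]'hlenQ = c₀ := by
    rw [List.getElem_of_eq (congrArg Walk.support hQeq) hlenQ]
    exact getElem_support_of_prefix C D (by rw [← hQeq]; exact hlenQ)
  have hgA : (A.append B).support[A.length]'hlenQ2 = x := getElem_support_of_prefix A B hlenQ2
  have hc0A : c₀ ∈ A.support := by
    rw [support_prefix A B]
    have hlen3 : C.length < (((A.append B).support).take (A.length + 1)).length := by
      rw [List.length_take, Walk.length_support, Walk.length_append]
      omega
    have hmem := List.getElem_mem hlen3
    rwa [List.getElem_take, hgC] at hmem
  have hcx : c₀ = x := hA c₀ hc0A hc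
  have hnd := hQpath.support_nodup
  have heq : C.length = A.length := by
    have hinj := (List.Nodup.getElem_inj_iff hnd (hi := hlenQ) (hj := hlenQ2)).mp
    apply hinj
    rw [hgC, hgA, hcx]
  omega

lemma append3_isPath {s x y t : V} (A : G.Walk s x) (B : G.Walk x y) (C : G.Walk y t)
    (hA : A.IsPath) (hB : B.IsPath) (hC : C.IsPath)
    (hAB : ∀ u ∈ A.support, u ∈ B.support → u = x)
    (hBC : ∀ u ∈ B.support, u ∈ C.support → u = y)
    (hAC : ∀ u ∈ A.support, u ∈ C.support → False) :
    (A.append (B.append C)).IsPath := by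
  rw [Walk.isPath_def, Walk.support_append, Walk.support_append]
  have htail : (B.support ++ C.support.tail).tail = B.support.tail ++ C.support.tail := by
    conv_lhs => rw [B.support_eq_cons]
    simp
  rw [htail, List.nodup_append, List.nodup_append]
  refine ⟨hA.support_nodup, ⟨hB.support_nodup.tail, hC.support_nodup.tail, ?_⟩, ?_⟩
  · intro u hu1 u' hu2 heq
    rw [← heq] at hu2
    have h1 : u ∈ B.support := List.tail_subset _ hu1
    have h2 : u ∈ C.support := List.tail_subset _ hu2
    have := hBC u h1 h2
    subst this
    have hnd := hC.support_nodup
    rw [C.support_eq_cons] at hnd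
    exact (List.nodup_cons.mp hnd).1 hu2
  · intro u hu1 u' hu2 heq
    rw [← heq] at hu2
    rcases List.mem_append.mp hu2 with h2 | h2
    · have h3 : u ∈ B.support := List.tail_subset _ h2
      have := hAB u hu1 h3
      subst this
      have hnd := hB.support_nodup
      rw [B.support_eq_cons] at hnd
      exact (List.nodup_cons.mp hnd).1 h2
    · exact hAC u hu1 (List.tail_subset _ h2)



lemma junction_of_append_isPath {s x t : V} {A : G.Walk s x} {B : G.Walk x t}
    (h : (A.append B).IsPath) : ∀ u ∈ A.support, u ∈ B.support → u = x := by
  intro u huA huB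
  have hnodup : (A.support ++ B.support.tail).Nodup := by
    have := h.support_nodup
    rwa [Walk.support_append] at this
  have hdisj := List.disjoint_of_nodup_append hnodup
  rcases (by rw [B.support_eq_cons] at huB; exact List.mem_cons.mp huB) with rfl | htail
  · rfl
  · exact absurd htail (hdisj huA)

/-- The key conservativity inequality. -/
lemma lemW (hw : Conservative G w) :
    ∀ (n : ℕ) {x y : V} (P : G.Walk x y) (R : (negSub G w).Walk x y), P.IsPath → R.IsPath →
    P.length + R.length ≤ n →
    (R.edges.map (fun e => if e ∈ P.edges then w e else -w e)).sum ≤ walkWeight G w P := by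
  intro n
  induction n with
  | zero =>
    intro x y P R hP hR hlen
    have h2 : R.length = 0 := by omega
    cases R with
    | nil =>
      cases P with
      | nil => simp [walkWeight]
      | cons h q => simp at hlen
    | cons h q => simp at h2
  | succ n ih =>
    intro x y P R hP hR hlen
    cases hRnil : R with
    | nil =>
      cases P with
      | nil => simp [walkWeight]
      | cons h q =>
        exfalso
        have h2 : (Walk.cons h q).IsPath := hP
        rw [Walk.isPath_iff_eq_nil] at h2
        simp at h2
    | cons hadj R'' =>
      rw [← hRnil]
      have hRlen : 1 ≤ R.length := by rw [hRnil]; simp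
      have hxy : x ≠ y := by
        intro hh
        subst hh
        rw [Walk.isPath_iff_eq_nil] at hR
        rw [hR] at hRnil
        simp at hRnil
      clear hRnil
      by_cases hmeet : ∃ z, z ∈ R.support ∧ z ≠ x ∧ z ≠ y ∧ z ∈ P.support
      · obtain ⟨z, hzR, hzx, hzy, hzP⟩ := hmeet
        set P₁ := P.takeUntil z hzP with hP₁
        set P₂ := P.dropUntil z hzP with hP₂
        set R₁ := R.takeUntil z hzR with hR₁
        set R₂ := R.dropUntil z hzR with hR₂
        have hPsplit : P₁.append P₂ = P := P.take_spec hzP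
        have hRsplit : R₁.append R₂ = R := R.take_spec hzR
        have hP1p : P₁.IsPath := hP.takeUntil hzP
        have hP2p : P₂.IsPath := hP.dropUntil hzP
        have hR1p : R₁.IsPath := hR.takeUntil hzR
        have hR2p : R₂.IsPath := hR.dropUntil hzR
        have hR1len : 1 ≤ R₁.length := by
          rcases Nat.eq_zero_or_pos R₁.length with h0 | h1
          · exact absurd (eq_of_length_zero _ h0) hzx.symm
          · exact h1
        have hR2len : 1 ≤ R₂.length := by
          rcases Nat.eq_zero_or_pos R₂.length with h0 | h1
          · exact absurd (eq_of_length_zero _ h0) hzy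
          · exact h1
        have hlen1 : P₁.length + P₂.length = P.length := by
          rw [← Walk.length_append, hPsplit]
        have hlen2 : R₁.length + R₂.length = R.length := by
          rw [← Walk.length_append, hRsplit]
        have hRe : R₁.edges ++ R₂.edges = R.edges := by
          rw [← Walk.edges_append, hRsplit]
        have hPe : P₁.edges ++ P₂.edges = P.edges := by
          rw [← Walk.edges_append, hPsplit]
        have ih1 := ih P₁ R₁ hP1p hR1p (by omega)
        have ih2 := ih P₂ R₂ hP2p hR2p (by omega)
        have key1 : (R₁.edges.map (fun e => if e ∈ P.edges then w e else -w e)).sum ≤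
            (R₁.edges.map (fun e => if e ∈ P₁.edges then w e else -w e)).sum := by
          apply List.sum_le_sum
          intro e he
          have hwneg : w e < 0 := weight_neg_of_mem_negSub
            (R.edges_subset_edgeSet (R.edges_takeUntil_subset hzR he))
          by_cases h1 : e ∈ P₁.edges
          · have h2 : e ∈ P.edges := by
              rw [← hPe]; exact List.mem_append_left _ h1
            simp [h1, h2]
          · simp only [h1, if_false]
            by_cases h2 : e ∈ P.edges <;> simp [h2] <;> linarith
        have key2 : (R₂.edges.map (fun e => if e ∈ P.edges then w e else -w e)).sum ≤
            (R₂.edges.map (fun e => if e ∈ P₂.edges then w e else -w e)).sum := by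
          apply List.sum_le_sum
          intro e he
          have hwneg : w e < 0 := weight_neg_of_mem_negSub
            (R.edges_subset_edgeSet (R.edges_dropUntil_subset hzR he))
          by_cases h1 : e ∈ P₂.edges
          · have h2 : e ∈ P.edges := by
              rw [← hPe]; exact List.mem_append_right _ h1
            simp [h1, h2]
          · simp only [h1, if_false]
            by_cases h2 : e ∈ P.edges <;> simp [h2] <;> linarith
        have hsum : (R.edges.map (fun e => if e ∈ P.edges then w e else -w e)).sum =
            (R₁.edges.map (fun e => if e ∈ P.edges then w e else -w e)).sum +
            (R₂.edges.map (fun e => if e ∈ P.edges then w e else -w e)).sum := by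
          rw [← hRe, List.map_append, List.sum_append]
        have hwsum : walkWeight G w P = walkWeight G w P₁ + walkWeight G w P₂ := by
          unfold walkWeight
          rw [← hPe, List.map_append, List.sum_append]
        linarith [hsum, hwsum, key1, key2, ih1, ih2]
      · push_neg at hmeet
        by_cases hshare : ∃ e, e ∈ R.edges ∧ e ∈ P.edges
        · obtain ⟨e, heR, heP⟩ := hshare
          induction e using Sym2.ind with
          | _ u₁ u₂ =>
            have hu1R : u₁ ∈ R.support := R.fst_mem_support_of_mem_edges heR
            have hu2R : u₂ ∈ R.support := R.snd_mem_support_of_mem_edges heR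
            have hu1P : u₁ ∈ P.support := P.fst_mem_support_of_mem_edges heP
            have hu2P : u₂ ∈ P.support := P.snd_mem_support_of_mem_edges heP
            have hne : u₁ ≠ u₂ := (R.adj_of_mem_edges heR).ne
            have hc1 : u₁ = x ∨ u₁ = y := by
              by_contra hcon
              push_neg at hcon
              exact hmeet u₁ hu1R hcon.1 hcon.2 hu1P
            have hc2 : u₂ = x ∨ u₂ = y := by
              by_contra hcon
              push_neg at hcon
              exact hmeet u₂ hu2R hcon.1 hcon.2 hu2P
            have hxy' : s(u₁, u₂) = s(x, y) := by
              rcases hc1 with rfl | rfl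
              · rcases hc2 with rfl | rfl
                · exact absurd rfl hne
                · rfl
              · rcases hc2 with rfl | rfl
                · rw [Sym2.eq_swap]
                · exact absurd rfl hne
            rw [hxy'] at heR heP
            have hadjG : G.Adj x y := P.adj_of_mem_edges heP
            have hadjN : (negSub G w).Adj x y := R.adj_of_mem_edges heR
            have hPeq : P = Walk.cons hadjG Walk.nil := by
              apply path_eq_of_edges_subset P _ hP
              · rw [Walk.cons_isPath_iff]
                simpa using hxy
              · intro e' he'
                simp only [Walk.edges_cons, Walk.edges_nil, List.mem_singleton] at he'
                rw [he']
                exact heP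
            have hReq : R = Walk.cons hadjN Walk.nil := by
              apply path_eq_of_edges_subset R _ hR
              · rw [Walk.cons_isPath_iff]
                simpa using hxy
              · intro e' he'
                simp only [Walk.edges_cons, Walk.edges_nil, List.mem_singleton] at he'
                rw [he']
                exact heR
            rw [hPeq, hReq]
            simp [walkWeight, hPeq ▸ heP]
        · push_neg at hshare
          set RG := R.transfer G (fun e he => negSub_edges_sub e (R.edges_subset_edgeSet he))
            with hRG
          have hRGedges : RG.edges = R.edges := R.edges_transfer _
          have hRGsupp : RG.support = R.support := R.support_transfer _
          set C : G.Walk x x := P.append RG.reverse with hC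
          have hCedges : C.edges = P.edges ++ R.edges.reverse := by
            rw [hC, Walk.edges_append, Walk.edges_reverse, hRGedges]
          have hRedne : R.edges ≠ [] := by
            intro h
            have := R.length_edges
            rw [h] at this
            simp at this
            omega
          have hcyc : C.IsCycle := by
            rw [Walk.isCycle_def]
            refine ⟨?_, ?_, ?_⟩
            · rw [Walk.isTrail_def, hCedges]
              rw [List.nodup_append]
              refine ⟨hP.isTrail.edges_nodup, List.nodup_reverse.mpr (hR.isTrail.edges_nodup), ?_⟩
              intro e he1 e' he2 heq
              rw [← heq] at he2
              exact hshare e (by simpa using he2) he1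
            · intro hnil
              have h0 : C.edges = [] := by rw [hnil]; rfl
              rw [hCedges] at h0
              rcases List.append_eq_nil_iff.mp h0 with ⟨_, h2⟩
              exact hRedne (by simpa using h2)
            · -- support tail nodup
              have hCsupp : C.support = P.support ++ RG.reverse.support.tail := by
                rw [hC, Walk.support_append]
              have hCtail : C.support.tail = P.support.tail ++ RG.reverse.support.tail := by
                rw [hCsupp]
                conv_lhs => rw [P.support_eq_cons]
                rfl
              rw [hCtail]
              have hrevsupp : RG.reverse.support = R.support.reverse := by
                rw [Walk.support_reverse, hRGsupp]
              rw [List.nodup_append]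
              refine ⟨hP.support_nodup.tail, ?_, ?_⟩
              · rw [hrevsupp]
                exact (List.nodup_reverse.mpr hR.support_nodup).tail
              · intro a ha1 a' ha2 heq
                rw [← heq] at ha2
                have haP : a ∈ P.support := List.tail_subset _ ha1
                have haR : a ∈ R.support := by
                  have h' := List.tail_subset _ ha2
                  rw [hrevsupp, List.mem_reverse] at h'
                  exact h'
                have hax : a = x ∨ a = y := by
                  by_contra hcon
                  push_neg at hcon
                  exact hmeet a haR hcon.1 hcon.2 haP
                rcases hax with h1 | h1
                · rw [h1] at ha1
                  have hnd := hP.support_nodup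
                  rw [P.support_eq_cons] at hnd
                  exact (List.nodup_cons.mp hnd).1 ha1
                · rw [h1] at ha2
                  have hnd : RG.reverse.support.Nodup := by
                    rw [hrevsupp]
                    exact List.nodup_reverse.mpr hR.support_nodup
                  rw [Walk.support_eq_cons RG.reverse] at hnd
                  exact (List.nodup_cons.mp hnd).1 ha2
          have h0 := hw x C hcyc
          have hCw : walkWeight G w C = walkWeight G w P + (R.edges.map w).sum := by
            unfold walkWeight
            rw [hCedges, List.map_append, List.sum_append, List.map_reverse, List.sum_reverse]
          have hfR : (R.edges.map (fun e => if e ∈ P.edges then w e else -w e)).sum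
              = -(R.edges.map w).sum := by
            have hcongr : R.edges.map (fun e => if e ∈ P.edges then w e else -w e)
                = R.edges.map (fun e => -w e) := by
              apply List.map_congr_left
              intro e he
              simp [hshare e he]
            rw [hcongr]
            induction R.edges with
            | nil => simp
            | cons a l ihl => simp only [List.map_cons, List.sum_cons, ihl]; ring
          rw [hfR]
          rw [hCw] at h0
          linarith

/-- The key parity lemma: a contiguous subpath of `Q` between two vertices of the
same negative tree has the same parity as the tree path, provided no leap on `Q`
is parity-changing. -/
lemma segment_parity (hw : Conservative G w) {s t a₀ : V} (Q : G.Walk s t)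
    (hnp : ∀ (x y : V) (L : G.Walk x y), IsLeapOn G w Q x y L → ¬ IsParityChanging G w L) :
    ∀ (n : ℕ) {x y : V} (P : G.Walk x y), P.length ≤ n → P.IsPath →
    NegTreeVertex G w x → (negSub G w).Reachable a₀ x →
    NegTreeVertex G w y → (negSub G w).Reachable a₀ y →
    (∃ (A : G.Walk s x) (B : G.Walk y t), Q = A.append (P.append B)) →
    ∀ (R : (negSub G w).Walk x y), R.IsPath → P.length % 2 = R.length % 2 := by
  have hac := negSub_acyclic hw
  intro n
  induction n with
  | zero =>
    intro x y P hlen hP _ _ _ _ _ R hR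
    have hxy : x = y := eq_of_length_zero P (by omega)
    subst hxy
    have : R = Walk.nil := (Walk.isPath_iff_eq_nil (p := R)).mp hR
    subst this
    have h0 : P.length = 0 := by omega
    simp [h0]
  | succ n ih =>
    intro x y P hlen hP hntx hrx hnty hry hctg R hR
    cases P with
    | nil =>
      have : R = Walk.nil := (Walk.isPath_iff_eq_nil (p := R)).mp hR
      subst this
      rfl
    | @cons x c y hadjG P'' =>
      -- find the first tree vertex z in P''
      obtain ⟨z, S', Pr, hsplit, hpz, hS'⟩ := exists_first_split
        (fun v => NegTreeVertex G w v ∧ (negSub G w).Reachable a₀ v) P''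
        ⟨y, P''.end_mem_support, hnty, hry⟩
      have hPeq : Walk.cons hadjG P'' = (Walk.cons hadjG S').append Pr := by
        rw [hsplit]; rfl
      set S : G.Walk x z := Walk.cons hadjG S' with hS
      have hSpath : S.IsPath := by
        have : ((Walk.cons hadjG S').append Pr).IsPath := by rw [← hPeq]; exact hP
        exact this.of_append_left
      have hPrpath : Pr.IsPath := by
        have : ((Walk.cons hadjG S').append Pr).IsPath := by rw [← hPeq]; exact hP
        exact this.of_append_right
      have hxz : x ≠ z := by
        intro hh
        subst hh
        rw [Walk.isPath_iff_eq_nil] at hSpath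
        simp [hS] at hSpath
      have hreach_xz : (negSub G w).Reachable x z := hrx.symm.trans hpz.2
      have hreach_zy : (negSub G w).Reachable z y := hpz.2.symm.trans hry
      -- leap condition 6 for S
      have hclass : ∀ v ∈ S.support, NegTreeVertex G w v → (negSub G w).Reachable x v →
          v = x ∨ v = z := by
        intro v hv hntv hrv
        rw [hS, Walk.support_cons, List.mem_cons] at hv
        rcases hv with rfl | hv
        · exact Or.inl rfl
        · exact Or.inr (hS' v hv ⟨hntv, hrx.trans hrv⟩)
      -- contiguity for recursion and for S
      obtain ⟨A, B, hQdec⟩ := hctg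
      have hQdecS : Q = A.append (S.append (Pr.append B)) := by
        rw [hQdec, hPeq]
        exact congrArg (A.append ·) (Walk.append_assoc S Pr B).symm
      have hQdecPr : Q = (A.append S).append (Pr.append B) := by
        rw [hQdecS]
        exact Walk.append_assoc A S (Pr.append B)
      -- establish: S.length % 2 = (tree path x z).length % 2
      obtain ⟨Wxz⟩ := id hreach_xz
      have hparS : ∀ (TP : (negSub G w).Walk x z), TP.IsPath →
          S.length % 2 = TP.length % 2 := by
        by_cases hcase : ∃ e ∈ S.edges, e ∈ (negSub G w).edgeSet ∧
            ∃ u ∈ e, (negSub G w).Reachable x u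
        · -- S is a single negative tree edge
          obtain ⟨e, heS, heN, u, hue, hru⟩ := hcase
          have hexz : e = s(x, z) ∧ (negSub G w).Adj x z := by
            induction e using Sym2.ind with
            | _ u₁ u₂ =>
              have hadjN : (negSub G w).Adj u₁ u₂ := heN
              have hr1 : (negSub G w).Reachable x u₁ := by
                rcases Sym2.mem_iff.mp hue with rfl | rfl
                · exact hru
                · exact hru.trans hadjN.symm.reachable
              have hr2 : (negSub G w).Reachable x u₂ := hr1.trans hadjN.reachable
              have hm1 : u₁ ∈ S.support := S.fst_mem_support_of_mem_edges heS
              have hm2 : u₂ ∈ S.support := S.snd_mem_support_of_mem_edges heS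
              have hc1 := hclass u₁ hm1 ⟨u₂, hadjN⟩ hr1
              have hc2 := hclass u₂ hm2 ⟨u₁, hadjN.symm⟩ hr2
              have hne : u₁ ≠ u₂ := hadjN.ne
              rcases hc1 with rfl | rfl
              · rcases hc2 with rfl | rfl
                · exact absurd rfl hne
                · exact ⟨rfl, hadjN⟩
              · rcases hc2 with rfl | rfl
                · exact ⟨Sym2.eq_swap, hadjN.symm⟩
                · exact absurd rfl hne
          obtain ⟨hexz, hadjN⟩ := hexz
          rw [hexz] at heS
          obtain ⟨c', hadj', S₁, hSeq, he₂⟩ := first_edge_of_start_mem S hSpath heS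
            (Sym2.mem_mk_left x z)
          have hzc : z = c' := by
            rcases Sym2.eq_iff.mp he₂ with ⟨_, h2⟩ | ⟨h1, h2⟩
            · exact h2
            · exact absurd h2.symm hxz
          subst hzc
          have hS₁ : S₁ = Walk.nil := by
            have : S₁.IsPath := by
              have := hSpath
              rw [hSeq, Walk.cons_isPath_iff] at this
              exact this.1
            exact (Walk.isPath_iff_eq_nil (p := S₁)).mp this
          have hSlen : S.length = 1 := by rw [hSeq, hS₁]; rfl
          intro TP hTP
          have hTPone : (Walk.cons hadjN Walk.nil : (negSub G w).Walk x z).length % 2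
              = TP.length % 2 :=
            walk_path_parity hac _ TP hTP
          simpa [hSlen] using hTPone
        · -- S is a leap on Q
          push_neg at hcase
          have hleap : IsLeap G w S :=
            ⟨hxz, hSpath, hntx, hpz.1, hreach_xz, hclass, by
              intro e he hcontra
              obtain ⟨u, hu, hrr⟩ := hcontra.2
              exact hcase e he hcontra.1 u hu hrr⟩
          have hlon : IsLeapOn G w Q x z S := ⟨hleap, A, Pr.append B, hQdecS⟩
          have hnpc := hnp x z S hlon
          intro TP hTP
          have : ¬ Odd (S.length + TP.length) := by
            intro hoddc
            exact hnpc ⟨TP, hTP, hoddc⟩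
          rw [Nat.odd_iff] at this
          omega
      -- recurse on Pr
      obtain ⟨Wzy⟩ := hreach_zy
      have hRzy : Wzy.bypass.IsPath := Wzy.bypass_isPath
      have hSlen1 : 1 ≤ S.length := by rw [hS]; simp
      have hlenPP : S.length + Pr.length = P''.length + 1 := by
        have := congrArg Walk.length hPeq
        rw [Walk.length_append] at this
        simp at this
        omega
      have ihPr := ih Pr (by simp at hlen; omega) hPrpath hpz.1 hpz.2 hnty hry
        ⟨A.append S, B, hQdecPr⟩ Wzy.bypass hRzy
      -- combine
      have hparS' := hparS Wxz.bypass Wxz.bypass_isPath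
      have hcomb := walk_path_parity hac (Wxz.bypass.append Wzy.bypass) R hR
      rw [Walk.length_append] at hcomb
      have hlenP : (Walk.cons hadjG P'').length = S.length + Pr.length := by
        simp only [Walk.length_cons]
        omega
      rw [hlenP]
      omega

end AuxLemmas


/-- If `Q` is a minimum-weight odd `(s,t)`-path containing the fewest leaps among all
minimum-weight odd `(s,t)`-paths, then either `Q` contains no leap, or `Q` contains at
least one parity-changing leap. -/
theorem min_odd_path_leap_dichotomy {V : Type*} [Fintype V]
    (G : SimpleGraph V) (w : Sym2 V → ℝ) (hw : Conservative G w)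
    {s t : V} (Q : G.Walk s t) (hQ : Q.IsPath) (hodd : Odd Q.length)
    (hmin : ∀ Q' : G.Walk s t, Q'.IsPath → Odd Q'.length →
      walkWeight G w Q ≤ walkWeight G w Q')
    (hleast : ∀ Q' : G.Walk s t, Q'.IsPath → Odd Q'.length →
      walkWeight G w Q' = walkWeight G w Q → numLeaps G w Q ≤ numLeaps G w Q') :
    (∀ (a b : V) (L : G.Walk a b), ¬ IsLeapOn G w Q a b L) ∨
    (∃ (a b : V) (L : G.Walk a b), IsLeapOn G w Q a b L ∧ IsParityChanging G w L) := by
  classical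
  by_contra hcon
  push_neg at hcon
  obtain ⟨⟨a₀, b₀, L₀, hleapON⟩, hB⟩ := hcon
  obtain ⟨hL₀, W₁, W₂, hQdec⟩ := hleapON
  obtain ⟨hab, hL₀path, hnta, hntb, hreachab, hsupcond, hedgecond⟩ := hL₀
  set pred : V → Prop := fun v => NegTreeVertex G w v ∧ (negSub G w).Reachable a₀ v
    with hpreddef
  have hpa : pred a₀ := ⟨hnta, Reachable.refl a₀⟩
  have hpb : pred b₀ := ⟨hntb, hreachab⟩
  have ha₀Q : a₀ ∈ Q.support := by
    rw [hQdec, Walk.mem_support_append_iff]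
    exact Or.inl W₁.end_mem_support
  -- first pred-vertex v₁
  obtain ⟨v₁, pre, rest, hQ1, hpv₁, hpre⟩ := exists_first_split pred Q ⟨a₀, ha₀Q, hpa⟩
  -- last pred-vertex v_k : split rest.reverse
  obtain ⟨vk, sufR, midR, hsplit2, hpvk, hsufR⟩ := exists_first_split pred rest.reverse
    ⟨v₁, by rw [Walk.support_reverse, List.mem_reverse]; exact rest.start_mem_support, hpv₁⟩
  set mid : G.Walk v₁ vk := midR.reverse with hmiddef
  set suf : G.Walk vk t := sufR.reverse with hsufdef
  have hrest : rest = mid.append suf := by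
    have h1 := congrArg Walk.reverse hsplit2
    rw [Walk.reverse_reverse, Walk.reverse_append] at h1
    exact h1
  have hQ2 : Q = pre.append (mid.append suf) := by rw [hQ1, hrest]
  have hsuf : ∀ u ∈ suf.support, pred u → u = vk := by
    intro u hu hpu
    apply hsufR u _ hpu
    rw [hsufdef, Walk.support_reverse, List.mem_reverse] at hu
    exact hu
  -- paths
  have hQ2path : (pre.append (mid.append suf)).IsPath := by rw [← hQ2]; exact hQ
  have hprepath : pre.IsPath := hQ2path.of_append_left
  have hmidsufpath : (mid.append suf).IsPath := hQ2path.of_append_right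
  have hmidpath : mid.IsPath := hmidsufpath.of_append_left
  have hsufpath : suf.IsPath := hmidsufpath.of_append_right
  -- a₀ and b₀ lie on mid
  have hmemmid : ∀ u, pred u → u ∈ Q.support → u ∈ mid.support := by
    intro u hpu huQ
    rw [hQ2, Walk.mem_support_append_iff] at huQ
    rcases huQ with h1 | h1
    · rw [hpre u h1 hpu]
      exact mid.start_mem_support
    · rw [Walk.mem_support_append_iff] at h1
      rcases h1 with h2 | h2
      · exact h2
      · rw [hsuf u h2 hpu]
        exact mid.end_mem_support
  have ha₀mid : a₀ ∈ mid.support := hmemmid a₀ hpa ha₀Q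
  have hb₀mid : b₀ ∈ mid.support := hmemmid b₀ hpb (by
    rw [hQdec, Walk.mem_support_append_iff]
    right
    rw [Walk.mem_support_append_iff]
    exact Or.inl L₀.end_mem_support)
  -- v₁ ≠ vk
  have hv1vk : v₁ ≠ vk := by
    intro hh
    subst hh
    have : mid = Walk.nil := (Walk.isPath_iff_eq_nil (p := mid)).mp hmidpath
    rw [this] at ha₀mid hb₀mid
    rw [Walk.mem_support_nil_iff] at ha₀mid hb₀mid
    exact hab (ha₀mid.trans hb₀mid.symm)
  -- the tree path d from v₁ to vk
  have hreach1k : (negSub G w).Reachable v₁ vk := hpv₁.2.symm.trans hpvk.2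
  obtain ⟨Wd⟩ := id hreach1k
  set d : (negSub G w).Walk v₁ vk := Wd.bypass with hddef
  have hdpath : d.IsPath := Wd.bypass_isPath
  have hdlen : 1 ≤ d.length := by
    rcases Nat.eq_zero_or_pos d.length with h0 | h1
    · exact absurd (eq_of_length_zero _ h0) hv1vk
    · exact h1
  have hdpred : ∀ v ∈ d.support, pred v := by
    intro v hv
    exact ⟨negtree_of_mem_support d hdlen v hv,
      hpv₁.2.trans (reachable_of_mem_support d hv)⟩
  set dG : G.Walk v₁ vk :=
    d.transfer G (fun e he => negSub_edges_sub e (d.edges_subset_edgeSet he)) with hdGdef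
  have hdGpath : dG.IsPath := hdpath.transfer _
  have hdGedges : dG.edges = d.edges := d.edges_transfer _
  have hdGsupp : dG.support = d.support := d.support_transfer _
  -- Q'' is a path
  have hQ''path : (pre.append (dG.append suf)).IsPath := by
    apply append3_isPath _ _ _ hprepath hdGpath hsufpath
    · intro u hu1 hu2
      rw [hdGsupp] at hu2
      exact hpre u hu1 (hdpred u hu2)
    · intro u hu1 hu2
      rw [hdGsupp] at hu1
      exact hsuf u hu2 (hdpred u hu1)
    · -- pre and suf are disjoint
      intro u hu1 hu2
      have hnd := hQ2path.support_nodup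
      rw [Walk.support_append, Walk.support_append] at hnd
      have htail : (mid.support ++ suf.support.tail).tail
          = mid.support.tail ++ suf.support.tail := by
        conv_lhs => rw [mid.support_eq_cons]
        simp
      rw [htail, List.nodup_append] at hnd
      have hdisj := hnd.2.2
      rcases (by rw [suf.support_eq_cons] at hu2; exact List.mem_cons.mp hu2 :
          u = vk ∨ u ∈ suf.support.tail) with heq | hu3
      · rw [heq] at hu1
        exact hv1vk (hpre vk hu1 hpvk).symm
      · exact hdisj u hu1 u (List.mem_append_right _ hu3) rfl
  -- parity of mid vs d
  have hnp : ∀ (x y : V) (L : G.Walk x y), IsLeapOn G w Q x y L →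
      ¬ IsParityChanging G w L := hB
  have hpar : mid.length % 2 = d.length % 2 := by
    apply segment_parity hw Q hnp mid.length mid le_rfl hmidpath
      hpv₁.1 hpv₁.2 hpvk.1 hpvk.2 ⟨pre, suf, hQ2⟩ d hdpath
  -- weight comparison
  have hlemW := lemW hw (mid.length + d.length) mid d hmidpath hdpath le_rfl
  by_cases hsub : ∀ e ∈ d.edges, e ∈ mid.edges
  · -- degenerate case : mid equals the tree path, contradiction with the leap L₀
    exfalso
    have hmid_eq : mid = dG := path_eq_of_edges_subset mid dG hmidpath hdGpath
      (by rw [hdGedges]; exact hsub)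
    -- L₀'s edges are inside mid
    have hQpath' : (pre.append ((mid.append suf))).IsPath := hQ2path
    have hQeq' : pre.append (mid.append suf) = W₁.append (L₀.append W₂) := by
      rw [← hQ2, ← hQdec]
    have hlen1 : pre.length ≤ W₁.length :=
      prefix_length_le pred hQpath' hQeq' hpre hpa
    -- reverse direction for the suffix
    have hQ2R : Q.reverse = suf.reverse.append (mid.reverse.append pre.reverse) := by
      rw [hQ2, Walk.reverse_append, Walk.reverse_append]
      exact (Walk.append_assoc _ _ _).symm
    have hQdecR : Q.reverse = W₂.reverse.append (L₀.reverse.append W₁.reverse) := by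
      rw [hQdec, Walk.reverse_append, Walk.reverse_append]
      exact (Walk.append_assoc _ _ _).symm
    have hQRpath : (suf.reverse.append (mid.reverse.append pre.reverse)).IsPath := by
      rw [← hQ2R]; exact hQ.reverse
    have hQReq : suf.reverse.append (mid.reverse.append pre.reverse)
        = W₂.reverse.append (L₀.reverse.append W₁.reverse) := by
      rw [← hQ2R, ← hQdecR]
    have hlen2 : suf.reverse.length ≤ W₂.reverse.length := by
      apply prefix_length_le pred hQRpath hQReq _ hpb
      intro u hu hpu
      apply hsuf u _ hpu
      rwa [Walk.support_reverse, List.mem_reverse] at hu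
    -- edge disjointness from the trail structure of Q
    have hQedges : Q.edges = W₁.edges ++ (L₀.edges ++ W₂.edges) := by
      rw [hQdec, Walk.edges_append, Walk.edges_append]
    have hQednd := hQ.isTrail.edges_nodup
    rw [hQedges, List.nodup_append] at hQednd
    obtain ⟨-, hnd2, hdisj1⟩ := hQednd
    rw [List.nodup_append] at hnd2
    obtain ⟨-, -, hdisj2⟩ := hnd2
    -- L₀ nonempty : first edge e₁
    have hL₀ne : L₀.edges ≠ [] := by
      intro h0
      have := L₀.length_edges
      rw [h0] at this
      exact hab (eq_of_length_zero L₀ (by simpa using this.symm))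
    obtain ⟨e₁, he₁⟩ := List.exists_mem_of_ne_nil _ hL₀ne
    -- e₁ ∈ Q.edges
    have he₁Q : e₁ ∈ Q.edges := by
      rw [hQedges]
      exact List.mem_append_right _ (List.mem_append_left _ he₁)
    -- e₁ ∉ pre.edges
    have he₁pre : e₁ ∉ pre.edges := by
      intro hmem
      have h1 : pre.edges = Q.edges.take pre.length := by
        rw [hQ2]
        exact edges_prefix pre (mid.append suf)
      have h2 : W₁.edges = Q.edges.take W₁.length := by
        rw [hQdec]
        exact edges_prefix W₁ (L₀.append W₂)
      have hsubpre : pre.edges ⊆ W₁.edges := by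
        rw [h1, h2]
        exact List.take_subset_take_left _ hlen1
      exact hdisj1 _ (hsubpre hmem) _ (List.mem_append_left _ he₁) rfl
    -- e₁ ∉ suf.edges
    have he₁suf : e₁ ∉ suf.edges := by
      intro hmem
      have h1 : suf.reverse.edges = Q.reverse.edges.take suf.reverse.length := by
        rw [hQ2R]
        exact edges_prefix suf.reverse _
      have h2 : W₂.reverse.edges = Q.reverse.edges.take W₂.reverse.length := by
        rw [hQdecR]
        exact edges_prefix W₂.reverse _
      have hsubsuf : suf.reverse.edges ⊆ W₂.reverse.edges := by
        rw [h1, h2]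
        exact List.take_subset_take_left _ hlen2
      have hmem2 : e₁ ∈ W₂.edges := by
        have h3 : e₁ ∈ suf.reverse.edges := by
          rw [Walk.edges_reverse, List.mem_reverse]
          exact hmem
        have h4 := hsubsuf h3
        rwa [Walk.edges_reverse, List.mem_reverse] at h4
      exact hdisj2 _ he₁ _ hmem2 rfl
    -- hence e₁ ∈ mid.edges = d.edges
    have he₁mid : e₁ ∈ mid.edges := by
      rw [hQ2, Walk.edges_append, Walk.edges_append] at he₁Q
      rcases List.mem_append.mp he₁Q with h1 | h1
      · exact absurd h1 he₁pre
      · rcases List.mem_append.mp h1 with h2 | h2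
        · exact h2
        · exact absurd h2 he₁suf
    have he₁d : e₁ ∈ d.edges := by
      rw [hmid_eq, hdGedges] at he₁mid
      exact he₁mid
    -- contradiction with the leap edge condition
    apply hedgecond e₁ he₁
    refine ⟨d.edges_subset_edgeSet he₁d, ?_⟩
    -- instead: endpoints of e₁ are on d, hence reachable from v₁, hence from a₀
    induction e₁ using Sym2.ind with
    | _ u₁ u₂ =>
      refine ⟨u₁, Sym2.mem_mk_left _ _, ?_⟩
      have hu₁d : u₁ ∈ d.support := d.fst_mem_support_of_mem_edges he₁d
      exact hpv₁.2.trans (reachable_of_mem_support d hu₁d)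
  · -- main case : strict weight decrease, contradiction with minimality
    push_neg at hsub
    obtain ⟨e₀, he₀d, he₀mid⟩ := hsub
    have hstrict : (d.edges.map w).sum <
        (d.edges.map (fun e => if e ∈ mid.edges then w e else -w e)).sum := by
      apply List.sum_lt_sum
      · intro e he
        have hwe : w e < 0 := weight_neg_of_mem_negSub (d.edges_subset_edgeSet he)
        by_cases h1 : e ∈ mid.edges
        · simp [h1]
        · simp only [h1, if_false]
          linarith
      · refine ⟨e₀, he₀d, ?_⟩
        have hwe : w e₀ < 0 := weight_neg_of_mem_negSub (d.edges_subset_edgeSet he₀d)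
        simp only [he₀mid, if_false]
        linarith
    have hwmid : (d.edges.map w).sum < walkWeight G w mid := lt_of_lt_of_le hstrict hlemW
    -- Q'' := pre ++ dG ++ suf
    set Q'' : G.Walk s t := pre.append (dG.append suf) with hQ''def
    have hQ''odd : Odd Q''.length := by
      have h1 : Q''.length = pre.length + (dG.length + suf.length) := by
        rw [hQ''def, Walk.length_append, Walk.length_append]
      have h2 : Q.length = pre.length + (mid.length + suf.length) := by
        rw [hQ2, Walk.length_append, Walk.length_append]
      have h3 : dG.length = d.length := d.length_transfer _
      rw [Nat.odd_iff] at hodd ⊢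
      omega
    have hQ''w : walkWeight G w Q'' < walkWeight G w Q := by
      have h1 : walkWeight G w Q'' =
          walkWeight G w pre + (walkWeight G w dG + walkWeight G w suf) := by
        rw [hQ''def, walkWeight_append, walkWeight_append]
      have h2 : walkWeight G w Q =
          walkWeight G w pre + (walkWeight G w mid + walkWeight G w suf) := by
        rw [hQ2, walkWeight_append, walkWeight_append]
      have h3 : walkWeight G w dG = (d.edges.map w).sum := by
        unfold walkWeight
        rw [hdGedges]
      rw [h1, h2, h3]
      linarith
    have := hmin Q'' hQ''path hQ''odd
    linarith
end
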